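/- arXiv:1302.5411 — 8 statements merged into one kernel-verified Lean document; each statement's English description precedes it below -/
import Mathlib

section
/- Let f ∈ R be arbitrary and let δ be the k-linear derivation of R determined by δ(x) = f and δ(g) = xg. Then δ^p(g) = δ^{p−2}(f)·g + x^p·g; equivalently, δ^p(g) = δ^{p−1}(x)·g + x^p·g. -/
set_option synthInstance.maxHeartbeats 1000000
set_option maxHeartbeats 1000000

/-- The commutative ring `R = k[x,g]/(g^p - 1)`. -/
noncomputable abbrev Rring (k : Type) [Field k] (p : ℕ) : Type :=
  MvPolynomial (Fin 2) k ⧸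
    Ideal.span {(MvPolynomial.X 1 : MvPolynomial (Fin 2) k) ^ p - 1}

noncomputable abbrev xR (k : Type) [Field k] (p : ℕ) : Rring k p :=
  Ideal.Quotient.mk _ (MvPolynomial.X 0)
noncomputable abbrev gR (k : Type) [Field k] (p : ℕ) : Rring k p :=
  Ideal.Quotient.mk _ (MvPolynomial.X 1)

/-!
For `T = δ + (x ·)` acting on `R`, Leibniz gives `δⁿ(g) = Tⁿ(1) · g`. The iterated commutators
`ad(δ)ⁿ(x ·) = (δⁿ(x) ·)` all commute, and for such a pair `a, b` Jacobson's formula collapses to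
`(a + b)^p = a^p + b^p + ad(a)^{p-1}(b)`; at `1`, where `δ^p(1) = 0`, this is
`T^p(1) = x^p + δ^{p-1}(x)`.

The collapsed formula is read off `W = a t + b` over `A[t]`: since `(p-1).choose i ≡ (-1)^i`,
`d/dt W^p = ∑ Wⁱ a W^{p-1-i} = ad(W)^{p-1}(a) = -ad(a)^{p-1}(b) t^{p-2}`, so among the coefficients
of `t¹, …, t^{p-1}` (which are determined by the derivative) only that of `t^{p-1}` survives.
-/

open Finset

theorem Nat.Prime.cast_choose_pred {R : Type*} [Ring R] {p : ℕ} [CharP R p] (hp : p.Prime) :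
    ∀ {i : ℕ}, i ≤ p - 1 → ((p - 1).choose i : R) = (-1) ^ i
  | 0, _ => by simp
  | i + 1, hi => by
    have hpascal : p.choose (i + 1) = (p - 1).choose i + (p - 1).choose (i + 1) := by
      conv_lhs => rw [← Nat.sub_add_cancel hp.one_le]
      exact Nat.choose_succ_succ _ _
    have hzero : (p.choose (i + 1) : R) = 0 :=
      (CharP.cast_eq_zero_iff R p _).2 (hp.dvd_choose_self i.succ_ne_zero (by omega))
    rw [hpascal, Nat.cast_add, hp.cast_choose_pred (by omega)] at hzero
    rw [pow_succ, mul_neg_one]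
    exact eq_neg_of_add_eq_zero_right hzero

theorem Commute.sub_pow_pred_eq_geom_sum₂ (k : Type*) {S : Type*} [CommRing k] [Ring S]
    [Algebra k S] {p : ℕ} [CharP k p] (hp : p.Prime) {x y : S} (h : Commute x y) :
    (x - y) ^ (p - 1) = ∑ i ∈ range p, x ^ i * y ^ (p - 1 - i) := by
  have hcast : ∀ {i}, i ≤ p - 1 → ((p - 1).choose i : S) = (-1) ^ i := fun hi => by
    rw [← map_natCast (algebraMap k S), hp.cast_choose_pred hi, map_pow, map_neg, map_one]
  rw [sub_eq_add_neg, h.neg_right.add_pow, Nat.sub_add_cancel hp.one_le]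
  refine sum_congr rfl fun i hi => ?_
  have hi : i ≤ p - 1 := by have := mem_range.1 hi; omega
  have hsign : (-1 : S) ^ (p - 1 - i) * (-1) ^ i = 1 := by
    rw [← pow_add, Nat.sub_add_cancel hi, ← hcast le_rfl, Nat.choose_self, Nat.cast_one]
  rw [hcast hi, neg_pow, mul_assoc, mul_assoc, ((Commute.neg_one_right _).pow_right i).eq,
    ← mul_assoc ((-1) ^ _), hsign, one_mul]

theorem iterate_lie_pred_eq_sum (k : Type*) {A : Type*} [CommRing k] [Ring A] [Algebra k A]
    {p : ℕ} [CharP k p] (hp : p.Prime) (a b : A) :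
    (⁅a, ·⁆)^[p - 1] b = ∑ i ∈ range p, a ^ i * b * a ^ (p - 1 - i) := by
  have hlie : (⁅a, ·⁆) = ⇑(LinearMap.mulLeft k a - LinearMap.mulRight k a) := by
    ext z; simp [Ring.lie_def]
  rw [hlie, ← Module.End.pow_apply,
    (LinearMap.commute_mulLeft_right a a).sub_pow_pred_eq_geom_sum₂ k hp, LinearMap.sum_apply]
  refine sum_congr rfl fun i _ => ?_
  simp [LinearMap.pow_mulLeft, LinearMap.pow_mulRight, mul_assoc]

namespace Polynomial

theorem derivative_pow_eq_sum {S : Type*} [Semiring S] (f : S[X]) (n : ℕ) :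
    derivative (f ^ n) = ∑ i ∈ range n, f ^ i * derivative f * f ^ (n - 1 - i) := by
  induction n with
  | zero => simp
  | succ n ih =>
    rw [pow_succ, derivative_mul, ih, sum_range_succ, sum_mul, Nat.add_sub_cancel, Nat.sub_self,
      pow_zero, mul_one]
    congr 1
    refine sum_congr rfl fun i hi => ?_
    rw [mul_assoc, ← pow_succ, show n - 1 - i + 1 = n - i by have := mem_range.1 hi; omega]

section Ring

variable {A : Type*} [Ring A]

theorem lie_C_mul_X_add_C_monomial (a b c : A) (n : ℕ) :
    ⁅C a * X + C b, monomial n c⁆ = monomial (n + 1) ⁅a, c⁆ + monomial n ⁅b, c⁆ := by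
  rw [C_mul_X_eq_monomial, ← monomial_zero_left (a := b)]
  simp only [Ring.lie_def, add_mul, mul_add, monomial_mul_monomial, map_sub, zero_add, add_zero,
    add_comm 1 n]
  abel

theorem iterate_lie_C_mul_X_add_C_C {a b : A} (hb : ∀ n, Commute b ((⁅a, ·⁆)^[n] b)) (n : ℕ) :
    (⁅C a * X + C b, ·⁆)^[n + 1] (C a) = -monomial n ((⁅a, ·⁆)^[n + 1] b) := by
  induction n with
  | zero =>
    rw [C_mul_X_eq_monomial, ← monomial_zero_left (a := b), ← monomial_zero_left (a := a)]
    simp [Ring.lie_def, add_mul, mul_add]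
  | succ n ih =>
    have hneg : ∀ W m : A[X], ⁅W, -m⁆ = -⁅W, m⁆ := fun W m => by
      rw [Ring.lie_def, Ring.lie_def, mul_neg, neg_mul, neg_sub_neg, neg_sub]
    rw [Function.iterate_succ_apply', ih, hneg, lie_C_mul_X_add_C_monomial,
      Ring.lie_def b, (hb _).eq, sub_self, map_zero, add_zero,
      Function.iterate_succ_apply' _ (n + 1)]

end Ring

section CharP

variable {A : Type*} [Ring A] {p : ℕ}

theorem coeff_eq_zero_of_derivative_eq_zero (k : Type*) [Field k] [Algebra k A] [CharP k p]
    {P : A[X]} (hP : derivative P = 0) {i : ℕ} (hi : ¬ p ∣ i) : P.coeff i = 0 := by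
  obtain ⟨j, rfl⟩ : ∃ j, i = j + 1 := Nat.exists_eq_succ_of_ne_zero (by rintro rfl; simp at hi)
  have hunit : ((j + 1 : ℕ) : k) ≠ 0 := by rwa [Ne, CharP.cast_eq_zero_iff k p]
  have h := congrArg (coeff · j) hP
  rw [coeff_derivative, coeff_zero, ← Nat.cast_succ, ← map_natCast (algebraMap k A),
    ← Algebra.commutes, ← Algebra.smul_def] at h
  exact (smul_eq_zero.1 h).resolve_left hunit

theorem derivative_C_mul_X_add_C_pow_char (k : Type*) [Field k] [Algebra k A] [CharP k p]
    (hp : p.Prime) {a b : A} (hb : ∀ n, Commute b ((⁅a, ·⁆)^[n] b)) :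
    derivative ((C a * X + C b) ^ p) = -monomial (p - 2) ((⁅a, ·⁆)^[p - 1] b) := by
  have hp1 : p - 1 = p - 2 + 1 := by have := hp.two_le; omega
  rw [derivative_pow_eq_sum, derivative_add, derivative_C_mul_X, derivative_C, add_zero,
    ← iterate_lie_pred_eq_sum k hp, hp1, iterate_lie_C_mul_X_add_C_C hb]

theorem C_mul_X_add_C_pow_char (k : Type*) [Field k] [Algebra k A] [CharP k p] (hp : p.Prime)
    {a b : A} (hb : ∀ n, Commute b ((⁅a, ·⁆)^[n] b)) :
    (C a * X + C b) ^ p =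
      C (b ^ p) + monomial (p - 1) ((⁅a, ·⁆)^[p - 1] b) + monomial p (a ^ p) := by
  have hp2 := hp.two_le
  have hpA : (p : A) = 0 := by rw [← map_natCast (algebraMap k A), CharP.cast_eq_zero, map_zero]
  have hderiv : derivative ((C a * X + C b) ^ p -
      (C (b ^ p) + monomial (p - 1) ((⁅a, ·⁆)^[p - 1] b) + monomial p (a ^ p))) = 0 := by
    rw [derivative_sub, derivative_C_mul_X_add_C_pow_char k hp hb, derivative_add,
      derivative_add, derivative_C, derivative_monomial, derivative_monomial, hpA,
      Nat.cast_sub hp.one_le, hpA, show p - 1 - 1 = p - 2 by omega]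
    simp
  have hdeg : (C a * X + C b).natDegree ≤ 1 := by compute_degree
  ext i
  rcases lt_trichotomy i p with hlt | rfl | hgt
  · rcases Nat.eq_zero_or_pos i with rfl | hpos
    · rw [← constantCoeff_apply, map_pow]
      simp [coeff_monomial, hp.ne_zero, show p - 1 ≠ 0 by omega, -map_pow]
    · rw [← sub_eq_zero, ← coeff_sub]
      exact coeff_eq_zero_of_derivative_eq_zero k hderiv (Nat.not_dvd_of_pos_of_lt hpos hlt)
  · have hlead := coeff_pow_of_natDegree_le (m := i) hdeg
    rw [mul_one] at hlead
    simp [hlead, coeff_monomial, coeff_C, hp.ne_zero, show i - 1 ≠ i by omega, -map_pow]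
  · rw [coeff_eq_zero_of_natDegree_lt ((natDegree_pow_le_of_le p hdeg).trans_lt (by omega))]
    simp [coeff_monomial, hgt.ne, show p - 1 ≠ i by omega, coeff_C, show i ≠ 0 by omega, -map_pow]

end CharP

end Polynomial

open Polynomial in
theorem add_pow_char_of_commute_iterate_lie (k : Type*) {A : Type*} [Field k] [Ring A]
    [Algebra k A] {p : ℕ} [CharP k p] (hp : p.Prime) {a b : A}
    (hb : ∀ n, Commute b ((⁅a, ·⁆)^[n] b)) :
    (a + b) ^ p = a ^ p + b ^ p + (⁅a, ·⁆)^[p - 1] b := by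
  have h := congrArg (eval₂RingHom' (RingHom.id A) 1 fun _ => Commute.one_right _)
    (C_mul_X_add_C_pow_char k hp hb)
  simp only [map_pow, map_add, map_mul] at h
  simp only [eval₂RingHom'_apply, eval₂_C, RingHom.id_apply, eval₂_X, mul_one, eval₂_monomial,
    one_pow] at h
  rw [h]
  abel

namespace Derivation

variable {k R : Type*} [CommRing k] [CommRing R] [Algebra k R] (δ : Derivation k R R)

theorem lie_toLinearMap_mulLeft (u : R) :
    ⁅(δ : Module.End k R), LinearMap.mulLeft k u⁆ = LinearMap.mulLeft k (δ u) := by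
  ext v
  simp [Ring.lie_def, leibniz, mul_comm]

theorem iterate_lie_toLinearMap_mulLeft (u : R) (n : ℕ) :
    (⁅(δ : Module.End k R), ·⁆)^[n] (LinearMap.mulLeft k u) = LinearMap.mulLeft k (δ^[n] u) := by
  induction n with
  | zero => rfl
  | succ n ih =>
    rw [Function.iterate_succ_apply', ih, lie_toLinearMap_mulLeft, Function.iterate_succ_apply']

theorem iterate_apply_eq_pow_apply_one_mul {x g : R} (hg : δ g = x * g) (n : ℕ) :
    δ^[n] g = (((δ : Module.End k R) + LinearMap.mulLeft k x) ^ n) 1 * g := by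
  induction n with
  | zero => simp
  | succ n ih =>
    rw [Function.iterate_succ_apply', ih, leibniz, hg, pow_succ', Module.End.mul_apply]
    simp only [smul_eq_mul, LinearMap.add_apply, coeFn_coe, LinearMap.mulLeft_apply]
    ring

theorem iterate_char_apply_of_apply_eq_mul {k : Type*} [Field k] [Algebra k R] {p : ℕ}
    [CharP k p] (hp : p.Prime) (δ : Derivation k R R) {x g : R} (hg : δ g = x * g) :
    δ^[p] g = (δ^[p - 1] x + x ^ p) * g := by
  have hcomm : ∀ n, Commute (LinearMap.mulLeft k x)
      ((⁅(δ : Module.End k R), ·⁆)^[n] (LinearMap.mulLeft k x)) := fun n => by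
    rw [iterate_lie_toLinearMap_mulLeft]
    exact (Commute.all _ _).map (Algebra.lmul k R)
  rw [iterate_apply_eq_pow_apply_one_mul δ hg, add_pow_char_of_commute_iterate_lie k hp hcomm,
    iterate_lie_toLinearMap_mulLeft, LinearMap.pow_mulLeft]
  have hδ1 : ((δ : Module.End k R) ^ p) 1 = 0 := by
    rw [← Nat.sub_add_cancel hp.one_le, pow_succ, Module.End.mul_apply, coeFn_coe,
      map_one_eq_zero, map_zero]
  simp [hδ1, add_comm]

end Derivation

theorem delta_pow_p_g_general (k : Type) [Field k] (p : ℕ) (hp : p.Prime) [CharP k p]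
    (f : Rring k p) (δ : Derivation k (Rring k p) (Rring k p))
    (hx : δ (xR k p) = f) (hg : δ (gR k p) = xR k p * gR k p) :
    (⇑δ)^[p] (gR k p) = (⇑δ)^[p - 2] f * gR k p + xR k p ^ p * gR k p ∧
      (⇑δ)^[p] (gR k p) = (⇑δ)^[p - 1] (xR k p) * gR k p + xR k p ^ p * gR k p := by
  have hpred : (⇑δ)^[p - 1] (xR k p) = (⇑δ)^[p - 2] f := by
    rw [show p - 1 = p - 2 + 1 by have := hp.two_le; omega, Function.iterate_succ_apply, hx]
  rw [δ.iterate_char_apply_of_apply_eq_mul hp hg, add_mul, hpred]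
  exact ⟨rfl, rfl⟩

/-- If `δ` is the derivation of `R = k[x,g]/(g^p-1)` with `δ(x) = f` and `δ(g) = x·g`,
then `δ^p(g) = δ^{p-2}(f)·g + x^p·g` (equivalently `δ^p(g) = δ^{p-1}(x)·g + x^p·g`). -/
theorem delta_pow_p_g (k : Type) [Field k] (p : ℕ) (hp : p.Prime) (hodd : Odd p) [CharP k p]
    (f : Rring k p) (δ : Derivation k (Rring k p) (Rring k p))
    (hx : δ (xR k p) = f) (hg : δ (gR k p) = xR k p * gR k p) :
    (⇑δ)^[p] (gR k p) = (⇑δ)^[p - 2] f * gR k p + xR k p ^ p * gR k p ∧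
      (⇑δ)^[p] (gR k p) = (⇑δ)^[p - 1] (xR k p) * gR k p + xR k p ^ p * gR k p :=
  delta_pow_p_g_general k p hp f δ hx hg
end

section
/- Define F_0 = 1, F_1 = 0 and F_n = δ(F_{n−1}) + (n−1)·f·F_{n−2} for n ≥ 2. Then for all n ≥ 2, F_n = Σ_α ( n! / ( (2!)^{a_2}(3!)^{a_3}···(n!)^{a_n} · a_2! a_3! ··· a_n! ) ) · f^{a_2} δ(f)^{a_3} δ^2(f)^{a_4} ··· δ^{n−2}(f)^{a_n}, where the sum runs over all partitions α = (2^{a_2}, 3^{a_3}, ..., n^{a_n}) of n all of whose parts are at least 2 (so Σ_j j·a_j = n). The integer coefficient of the monomial indexed by α is the number of ways to partition a set of n people into a_j cliques of size j for each j ≥ 2. -/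
/-!
Read `F n` as a weighted count of the ways to split `n` people into cliques of size at least
two, a clique of size `j` weighing `δ^[j - 2] f`. In the recursion the last person either joins
one of the cliques of the others, which is what the Leibniz rule does to the monomial (the term
`δ (F (n + 1))`), or forms a pair with one of the `n + 1` others (the term `(n + 1) • f * F n`).

Grouping the splittings by clique type `t` (the multiset of clique sizes), the coefficient of the
monomial of `t` is `Multiset.bell t`, and the recursion becomes the identity
`bell t = ∑ₖ bell tₖ * count (k - 1) tₖ`, where `tₖ` lowers one part `k` of `t` to `k - 1`
(remove the last person from their clique). It follows from `bell t * bellDenom t = t.sum !`.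
-/

/-- The coefficient of the monomial indexed by the partition `α` in `F n`:
`n! / ((2!)^{a_2} ⋯ (n!)^{a_n} · a_2! ⋯ a_n!)`, the number of ways to split `n`
people into `a_j` cliques of size `j` for each `j ≥ 2`. -/
def cliqueCoeff {n : ℕ} (α : n.Partition) : ℕ :=
  n.factorial /
    ((α.parts.map Nat.factorial).prod *
      ∏ j ∈ α.parts.toFinset, (α.parts.count j).factorial)

open Nat

namespace Multiset

def bellDenom (m : Multiset ℕ) : ℕ :=
  (m.map (· !)).prod * ∏ j ∈ m.toFinset.erase 0, (m.count j)!

theorem bell_mul_bellDenom (m : Multiset ℕ) : m.bell * m.bellDenom = m.sum ! := by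
  rw [bellDenom, ← mul_assoc, bell_mul_eq]

theorem bellDenom_pos (m : Multiset ℕ) : 0 < m.bellDenom :=
  Nat.mul_pos (prod_pos fun _ h => by obtain ⟨j, -, rfl⟩ := mem_map.1 h; positivity)
    (by positivity)

theorem bellDenom_cons {a : ℕ} (ha : a ≠ 0) (m : Multiset ℕ) :
    (a ::ₘ m).bellDenom = a ! * (m.count a + 1) * m.bellDenom := by
  set T := m.toFinset.erase 0
  have hcons : ∏ j ∈ (a ::ₘ m).toFinset.erase 0, ((a ::ₘ m).count j)! =
      (m.count a + 1)! * ∏ j ∈ T.erase a, (m.count j)! := by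
    rw [toFinset_cons, Finset.erase_insert_of_ne ha,
      ← Finset.mul_prod_erase _ _ (Finset.mem_insert_self a T), Finset.erase_insert_eq_erase,
      count_cons_self]
    congr 1
    exact Finset.prod_congr rfl fun j hj => by rw [count_cons_of_ne (Finset.ne_of_mem_erase hj)]
  have hm : ∏ j ∈ T, (m.count j)! = (m.count a)! * ∏ j ∈ T.erase a, (m.count j)! := by
    by_cases haT : a ∈ T
    · exact (Finset.mul_prod_erase _ _ haT).symm
    · have : a ∉ m := fun h => haT (Finset.mem_erase.2 ⟨ha, mem_toFinset.2 h⟩)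
      rw [Finset.erase_eq_of_notMem haT, count_eq_zero.2 this, factorial_zero, one_mul]
  rw [bellDenom, bellDenom, map_cons, prod_cons, hcons, hm, factorial_succ]
  ring

theorem bell_cons_pred_mul (u : Multiset ℕ) {k : ℕ} (hk : 2 ≤ k) :
    ((k - 1) ::ₘ u).bell * ((k - 1) ::ₘ u).count (k - 1) * (k ::ₘ u).sum =
      (k ::ₘ u).bell * (k * (k ::ₘ u).count k) := by
  have hpred := bell_mul_bellDenom ((k - 1) ::ₘ u)
  have hk' := bell_mul_bellDenom (k ::ₘ u)
  rw [bellDenom_cons (by omega)] at hpred hk'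
  rw [sum_cons] at hpred hk' ⊢
  rw [count_cons_self, count_cons_self]
  have hfac : k ! = k * (k - 1)! := by
    rw [← Nat.mul_factorial_pred (by omega)]
  have hsum : (k + u.sum)! = (k + u.sum) * (k - 1 + u.sum)! := by
    rw [show k + u.sum = (k - 1 + u.sum) + 1 by omega, factorial_succ]
  refine Nat.eq_of_mul_eq_mul_right (bellDenom_pos (k ::ₘ u)) ?_
  rw [bellDenom_cons (by omega)]
  calc _ = (k + u.sum) * k * (u.count k + 1) *
        (((k - 1) ::ₘ u).bell * ((k - 1)! * (u.count (k - 1) + 1) * u.bellDenom)) := by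
        rw [hfac]; ring
    _ = k * (u.count k + 1) * (k + u.sum)! := by rw [hpred, hsum]; ring
    _ = _ := by rw [← hk']; ring

theorem bell_one_cons_mul (u : Multiset ℕ) :
    (1 ::ₘ u).bell * (u.count 1 + 1) = (u.sum + 1) * u.bell := by
  have h1 := bell_mul_bellDenom (1 ::ₘ u)
  have h := bell_mul_bellDenom u
  rw [bellDenom_cons one_ne_zero, sum_cons, factorial_one, one_mul, add_comm 1,
    factorial_succ, ← h] at h1
  refine Nat.eq_of_mul_eq_mul_right (bellDenom_pos u) ?_
  calc _ = (1 ::ₘ u).bell * ((u.count 1 + 1) * u.bellDenom) := by ring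
    _ = _ := by rw [h1]; ring

theorem bell_eq_sum_bell_cons_pred {t : Multiset ℕ} (ht : ∀ k ∈ t, 2 ≤ k) (h0 : t ≠ 0) :
    t.bell = ∑ k ∈ t.toFinset,
      ((k - 1) ::ₘ t.erase k).bell * ((k - 1) ::ₘ t.erase k).count (k - 1) := by
  obtain ⟨a, ha⟩ := exists_mem_of_ne_zero h0
  have hpos : 0 < t.sum := (ht a ha).trans_lt' (by omega) |>.trans_le (le_sum_of_mem ha)
  refine Nat.eq_of_mul_eq_mul_right hpos ?_
  rw [Finset.sum_mul]
  calc t.bell * t.sum = ∑ k ∈ t.toFinset, t.bell * (k * t.count k) := by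
        rw [← Finset.mul_sum, Finset.sum_multiset_count]
        simp only [smul_eq_mul, mul_comm]
    _ = _ := Finset.sum_congr rfl fun k hk => by
        have hkt := mem_toFinset.1 hk
        have := bell_cons_pred_mul (t.erase k) (ht k hkt)
        rw [cons_erase hkt] at this
        exact this.symm

end Multiset

def cliqueTypes (n : ℕ) : Finset (Multiset ℕ) :=
  ((Finset.univ : Finset n.Partition).image Nat.Partition.parts).filter fun s => ∀ j ∈ s, 2 ≤ j

theorem mem_cliqueTypes {n : ℕ} {s : Multiset ℕ} :
    s ∈ cliqueTypes n ↔ s.sum = n ∧ ∀ j ∈ s, 2 ≤ j := by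
  simp only [cliqueTypes, Finset.mem_filter, Finset.mem_image, Finset.mem_univ, true_and]
  constructor
  · rintro ⟨⟨α, rfl⟩, hs⟩
    exact ⟨α.parts_sum, hs⟩
  · rintro ⟨rfl, hs⟩
    exact ⟨⟨⟨s, fun hj => (hs _ hj).trans_lt' two_pos, rfl⟩, rfl⟩, hs⟩

theorem eq_zero_of_mem_cliqueTypes {n : ℕ} {s : Multiset ℕ} (hn : n < 2)
    (hs : s ∈ cliqueTypes n) : s = 0 := by
  obtain ⟨rfl, hge⟩ := mem_cliqueTypes.1 hs
  refine Multiset.eq_zero_of_forall_notMem fun j hj => ?_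
  have := Multiset.le_sum_of_mem hj
  have := hge j hj
  omega

theorem cliqueTypes_zero : cliqueTypes 0 = {0} :=
  Finset.eq_singleton_iff_unique_mem.2
    ⟨mem_cliqueTypes.2 ⟨rfl, by simp⟩, fun _ => eq_zero_of_mem_cliqueTypes two_pos⟩

theorem cliqueTypes_one : cliqueTypes 1 = ∅ :=
  Finset.eq_empty_of_forall_notMem fun s hs => by
    have hsum := (mem_cliqueTypes.1 hs).1
    rw [eq_zero_of_mem_cliqueTypes one_lt_two hs, Multiset.sum_zero] at hsum
    exact zero_ne_one hsum

theorem cliqueCoeff_eq_bell {n : ℕ} (α : n.Partition) : cliqueCoeff α = α.parts.bell := by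
  have h0 : 0 ∉ α.parts.toFinset := fun h => (α.parts_pos (Multiset.mem_toFinset.1 h)).ne rfl
  rw [cliqueCoeff, Multiset.bell_eq, Finset.erase_eq_of_notMem h0, α.parts_sum]

section Reindex

variable {M : Type*} [AddCommMonoid M]

theorem sum_cliqueTypes_succ_erase_two (N : ℕ) (g : Multiset ℕ → ℕ → M) :
    ∑ t ∈ cliqueTypes (N + 1), ∑ k ∈ t.toFinset.erase 2, g t k =
      ∑ s ∈ cliqueTypes N, ∑ j ∈ s.toFinset, g ((j + 1) ::ₘ s.erase j) (j + 1) := by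
  rw [Finset.sum_sigma', Finset.sum_sigma']
  refine Finset.sum_nbij' (fun p => ⟨(p.2 - 1) ::ₘ p.1.erase p.2, p.2 - 1⟩)
    (fun q => ⟨(q.2 + 1) ::ₘ q.1.erase q.2, q.2 + 1⟩) ?_ ?_ ?_ ?_ ?_
  · rintro ⟨t, k⟩ hp
    simp only [Finset.mem_sigma, Finset.mem_erase, Multiset.mem_toFinset, mem_cliqueTypes] at hp ⊢
    obtain ⟨⟨hsum, ht⟩, hk2, hkt⟩ := hp
    have := Multiset.sum_erase hkt
    have := ht k hkt
    refine ⟨⟨by rw [Multiset.sum_cons]; omega, ?_⟩, Multiset.mem_cons_self _ _⟩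
    simp only [Multiset.mem_cons, forall_eq_or_imp]
    exact ⟨by omega, fun j hj => ht j (Multiset.mem_of_mem_erase hj)⟩
  · rintro ⟨s, j⟩ hq
    simp only [Finset.mem_sigma, Finset.mem_erase, Multiset.mem_toFinset, mem_cliqueTypes] at hq ⊢
    obtain ⟨⟨hsum, hs⟩, hjs⟩ := hq
    have := Multiset.sum_erase hjs
    have := hs j hjs
    refine ⟨⟨by rw [Multiset.sum_cons]; omega, ?_⟩, by omega, Multiset.mem_cons_self _ _⟩
    simp only [Multiset.mem_cons, forall_eq_or_imp]
    exact ⟨by omega, fun i hi => hs i (Multiset.mem_of_mem_erase hi)⟩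
  · rintro ⟨t, k⟩ hp
    simp only [Finset.mem_sigma, Finset.mem_erase, Multiset.mem_toFinset, mem_cliqueTypes] at hp
    obtain ⟨⟨-, ht⟩, -, hkt⟩ := hp
    have hk : k - 1 + 1 = k := by have := ht k hkt; omega
    simp only [Multiset.erase_cons_head, hk, Multiset.cons_erase hkt]
  · rintro ⟨s, j⟩ hq
    simp only [Finset.mem_sigma, Multiset.mem_toFinset] at hq
    simp only [Multiset.erase_cons_head, add_tsub_cancel_right, Multiset.cons_erase hq.2]
  · rintro ⟨t, k⟩ hp
    simp only [Finset.mem_sigma, Finset.mem_erase, Multiset.mem_toFinset, mem_cliqueTypes] at hp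
    obtain ⟨⟨-, ht⟩, -, hkt⟩ := hp
    have hk : k - 1 + 1 = k := by have := ht k hkt; omega
    simp only [Multiset.erase_cons_head, hk, Multiset.cons_erase hkt]

theorem sum_cliqueTypes_add_two_ite (n : ℕ) (g : Multiset ℕ → M) :
    ∑ t ∈ cliqueTypes (n + 2), (if 2 ∈ t then g t else 0) =
      ∑ u ∈ cliqueTypes n, g (2 ::ₘ u) := by
  rw [← Finset.sum_filter]
  refine Finset.sum_nbij' (fun t => t.erase 2) (fun u => 2 ::ₘ u) ?_ ?_ ?_ ?_ ?_
  · intro t ht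
    simp only [Finset.mem_filter, mem_cliqueTypes] at ht ⊢
    obtain ⟨⟨hsum, ht⟩, h2⟩ := ht
    have := Multiset.sum_erase h2
    exact ⟨by omega, fun j hj => ht j (Multiset.mem_of_mem_erase hj)⟩
  · intro u hu
    simp only [Finset.mem_filter, mem_cliqueTypes, Multiset.sum_cons, Multiset.mem_cons,
      forall_eq_or_imp] at hu ⊢
    exact ⟨⟨by omega, le_rfl, hu.2⟩, Or.inl trivial⟩
  · intro t ht
    exact Multiset.cons_erase (Finset.mem_filter.1 ht).2
  · intro u _
    exact Multiset.erase_cons_head 2 u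
  · intro t ht
    rw [Multiset.cons_erase (Finset.mem_filter.1 ht).2]

end Reindex

theorem Derivation.leibniz_multiset_prod {R A M ι : Type*} [CommSemiring R] [CommSemiring A]
    [Algebra R A] [AddCommMonoid M] [Module A M] [Module R M] [DecidableEq ι]
    (D : Derivation R A M) (s : Multiset ι) (g : ι → A) :
    D (s.map g).prod = (s.map fun i => ((s.erase i).map g).prod • D (g i)).sum := by
  induction s using Multiset.induction_on with
  | empty => simp
  | cons a s ih =>
    rw [Multiset.map_cons, Multiset.prod_cons, D.leibniz, ih, Multiset.map_cons, Multiset.sum_cons,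
      Multiset.erase_cons_head, add_comm, Multiset.smul_sum, Multiset.map_map]
    congr 2
    refine Multiset.map_congr rfl fun i hi => ?_
    rw [Multiset.erase_cons_tail_of_mem hi, Multiset.map_cons, Multiset.prod_cons,
      Function.comp_apply, smul_smul]

section CliqueSum

variable {R A : Type*} [CommSemiring R] [CommSemiring A] [Algebra R A] (D : Derivation R A A)
  (f : A)

def cliqueMonomial (s : Multiset ℕ) : A := (s.map fun j => D^[j - 2] f).prod

def cliqueSum (n : ℕ) : A := ∑ s ∈ cliqueTypes n, s.bell • cliqueMonomial D f s

theorem cliqueMonomial_cons (j : ℕ) (s : Multiset ℕ) :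
    cliqueMonomial D f (j ::ₘ s) = D^[j - 2] f * cliqueMonomial D f s := by
  rw [cliqueMonomial, Multiset.map_cons, Multiset.prod_cons, cliqueMonomial]

theorem derivation_cliqueMonomial {s : Multiset ℕ} (hs : ∀ j ∈ s, 2 ≤ j) :
    D (cliqueMonomial D f s) =
      ∑ j ∈ s.toFinset, s.count j • cliqueMonomial D f ((j + 1) ::ₘ s.erase j) := by
  rw [cliqueMonomial, D.leibniz_multiset_prod, Finset.sum_multiset_map_count]
  refine Finset.sum_congr rfl fun j hj => ?_
  have hj2 := hs j (Multiset.mem_toFinset.1 hj)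
  rw [cliqueMonomial_cons, show j + 1 - 2 = j - 2 + 1 by omega, Function.iterate_succ_apply',
    smul_eq_mul, mul_comm, cliqueMonomial]

theorem cliqueSum_zero : cliqueSum D f 0 = 1 := by
  simp [cliqueSum, cliqueTypes_zero, cliqueMonomial]

theorem cliqueSum_one : cliqueSum D f 1 = 0 := by
  simp [cliqueSum, cliqueTypes_one]

theorem cliqueSum_add_two (n : ℕ) :
    cliqueSum D f (n + 2) = D (cliqueSum D f (n + 1)) + (n + 1) • (f * cliqueSum D f n) := by
  set c : Multiset ℕ → ℕ → ℕ := fun t k =>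
    ((k - 1) ::ₘ t.erase k).bell * ((k - 1) ::ₘ t.erase k).count (k - 1) with hc
  have hD : D (cliqueSum D f (n + 1)) =
      ∑ t ∈ cliqueTypes (n + 2), ∑ k ∈ t.toFinset.erase 2, c t k • cliqueMonomial D f t := by
    rw [sum_cliqueTypes_succ_erase_two, cliqueSum, map_sum]
    refine Finset.sum_congr rfl fun s hs => ?_
    rw [D.map_smul_of_tower, derivation_cliqueMonomial D f (mem_cliqueTypes.1 hs).2,
      Finset.smul_sum]
    refine Finset.sum_congr rfl fun j hj => ?_
    simp only [hc, Multiset.erase_cons_head, add_tsub_cancel_right,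
      Multiset.cons_erase (Multiset.mem_toFinset.1 hj), smul_smul]
  have hf : (n + 1) • (f * cliqueSum D f n) = ∑ t ∈ cliqueTypes (n + 2),
      if 2 ∈ t then ((n + 1) * (t.erase 2).bell) • cliqueMonomial D f t else 0 := by
    rw [sum_cliqueTypes_add_two_ite, cliqueSum, Finset.mul_sum, Finset.smul_sum]
    refine Finset.sum_congr rfl fun u _ => ?_
    rw [Multiset.erase_cons_head, cliqueMonomial_cons, Function.iterate_zero_apply,
      mul_smul_comm, smul_smul]
  rw [hD, hf, ← Finset.sum_add_distrib]
  -- Lowering a part `k ≥ 3` undoes a step of `D`; lowering a part `2` leaves a singleton, and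
  -- these terms make up `(n + 1) • (f * cliqueSum D f n)`.
  refine Finset.sum_congr rfl fun t ht => ?_
  obtain ⟨hsum, hge⟩ := mem_cliqueTypes.1 ht
  have ht0 : t ≠ 0 := by rintro rfl; simp at hsum
  rw [Multiset.bell_eq_sum_bell_cons_pred hge ht0, Finset.sum_smul]
  split_ifs with h2
  · rw [← Finset.sum_erase_add _ _ (Multiset.mem_toFinset.2 h2)]
    congr 2
    have := Multiset.sum_erase h2
    rw [show 2 - 1 = 1 from rfl, Multiset.count_cons_self, Multiset.bell_one_cons_mul,
      show (t.erase 2).sum = n by omega]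
  · rw [Finset.erase_eq_of_notMem (by simpa using h2), add_zero]

theorem cliqueSum_eq_sum_partition (n : ℕ) :
    cliqueSum D f n = ∑ α : n.Partition,
      if ∀ j ∈ α.parts, 2 ≤ j then cliqueCoeff α • (α.parts.map fun j => D^[j - 2] f).prod
      else 0 := by
  rw [← Finset.sum_filter, cliqueSum, cliqueTypes, Finset.filter_image,
    Finset.sum_image fun α _ β _ h => Nat.Partition.ext h]
  simp only [cliqueCoeff_eq_bell, cliqueMonomial]

end CliqueSum

/-- If `F 0 = 1`, `F 1 = 0`, and `F n = δ(F (n-1)) + (n-1)·f·F (n-2)`, then for all `n ≥ 2`,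
`F n` is the sum, over partitions `α = (2^{a_2},…,n^{a_n})` of `n` with all parts at least `2`,
of the monomial `f^{a_2} δ(f)^{a_3} ⋯ δ^{n-2}(f)^{a_n}` with integer coefficient
`n!/((2!)^{a_2}⋯(n!)^{a_n}·a_2!⋯a_n!)` — the number of ways `n` people can be divided into
`a_j` cliques of size `j` for each `j ≥ 2`. -/
theorem F_partition_formula (S : Type) [CommRing S] (δ : S → S)
    (hadd : ∀ a b : S, δ (a + b) = δ a + δ b)
    (hleibniz : ∀ a b : S, δ (a * b) = a * δ b + δ a * b)
    (f : S) (F : ℕ → S)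
    (hF0 : F 0 = 1) (hF1 : F 1 = 0)
    (hFrec : ∀ n : ℕ, F (n + 2) = δ (F (n + 1)) + (n + 1) • (f * F n)) :
    ∀ n : ℕ, 2 ≤ n →
      F n = ∑ α : n.Partition,
        if ∀ j ∈ α.parts, 2 ≤ j then
          cliqueCoeff α • (α.parts.map fun j => δ^[j - 2] f).prod
        else 0 := by
  let D : Derivation ℤ S S := Derivation.mk' (AddMonoidHom.mk' δ hadd).toIntLinearMap
    fun a b => by simpa [mul_comm (δ a)] using hleibniz a b
  have hF : ∀ n, F n = cliqueSum D f n := by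
    intro n
    induction n using Nat.twoStepInduction with
    | zero => rw [hF0, cliqueSum_zero]
    | one => rw [hF1, cliqueSum_one]
    | more n ih₀ ih₁ => rw [hFrec, cliqueSum_add_two, ← ih₀, ← ih₁]; rfl
  intro n _
  rw [hF, cliqueSum_eq_sum_partition]
  rfl
end

section
/- For every n ≥ 1 there exist elements f_0, f_1, ..., f_n ∈ kG, with f_k = 0 whenever k ≢ n (mod 2), such that δ^n(g) = (Σ_{k=0}^{n} f_k x^k)·g. In particular, g divides δ^n(g) in R for all n ≥ 1, and for every odd n — in particular for n = p — the element δ(g) = xg divides δ^n(g) in R. -/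
set_option synthInstance.maxHeartbeats 1000000
set_option maxHeartbeats 1000000

/-- Let `λ = ∑ c_i g^i ∈ kG ⊆ R` and `δ` the derivation of `R` with `δ(x) = λ`, `δ(g) = xg`.
For every `n ≥ 1` there are `f_0, …, f_n ∈ kG`, vanishing in the degrees `k ≢ n (mod 2)`,
with `δ^n(g) = (∑_k f_k x^k)·g`.  In particular `g ∣ δ^n(g)`, and `xg = δ(g)` divides
`δ^n(g)` for every odd `n` — in particular for `n = p`. -/
theorem delta_pow_g_form (k : Type) [Field k] (p : ℕ) (hp : p.Prime) (hodd : Odd p) [CharP k p]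
    (c : Fin p → k) (δ : Derivation k (Rring k p) (Rring k p))
    (hx : δ (xR k p) = ∑ i : Fin p, c i • gR k p ^ (i : ℕ))
    (hg : δ (gR k p) = xR k p * gR k p) :
    ∀ n : ℕ, 1 ≤ n →
      (∃ d : Fin (n + 1) → Fin p → k,
        (∀ m : Fin (n + 1), (m : ℕ) % 2 ≠ n % 2 → d m = 0) ∧
        (⇑δ)^[n] (gR k p) =
          (∑ m : Fin (n + 1), (∑ j : Fin p, d m j • gR k p ^ (j : ℕ)) * xR k p ^ (m : ℕ)) *
            gR k p) ∧
      gR k p ∣ (⇑δ)^[n] (gR k p) ∧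
      (Odd n → xR k p * gR k p ∣ (⇑δ)^[n] (gR k p)) := by
  classical
  set x : Rring k p := xR k p with hxdef
  set g : Rring k p := gR k p with hgdef
  set lam : Rring k p := ∑ i : Fin p, c i • g ^ (i : ℕ) with hlamdef
  -- g ^ p = 1
  have hgp : g ^ p = 1 := by
    have hmem : ((MvPolynomial.X 1 : MvPolynomial (Fin 2) k) ^ p - 1) ∈
        Ideal.span {(MvPolynomial.X 1 : MvPolynomial (Fin 2) k) ^ p - 1} :=
      Ideal.subset_span rfl
    have h0 : (Ideal.Quotient.mk _ ((MvPolynomial.X 1 : MvPolynomial (Fin 2) k) ^ p - 1) :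
        Rring k p) = 0 := Ideal.Quotient.eq_zero_iff_mem.mpr hmem
    have h1 : g ^ p - 1 = 0 := by simpa [map_sub, map_pow] using h0
    exact sub_eq_zero.mp h1
  -- the subspace kG
  set KG : Submodule k (Rring k p) :=
    Submodule.span k (Set.range fun j : Fin p => g ^ (j : ℕ)) with hKGdef
  have hmemiff : ∀ a : Rring k p,
      a ∈ KG ↔ ∃ cc : Fin p → k, ∑ j : Fin p, cc j • g ^ (j : ℕ) = a := by
    intro a
    rw [hKGdef]
    exact Submodule.mem_span_range_iff_exists_fun k
  -- all powers of g lie in kG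
  have hgpow : ∀ j : ℕ, g ^ j ∈ KG := by
    intro j
    have hmod : g ^ j = g ^ (j % p) := by
      conv_lhs => rw [← Nat.div_add_mod j p]
      rw [pow_add, pow_mul, hgp, one_pow, one_mul]
    rw [hmod]
    exact Submodule.subset_span ⟨⟨j % p, Nat.mod_lt _ hp.pos⟩, rfl⟩
  -- kG is closed under multiplication
  have hmulKG : ∀ a ∈ KG, ∀ b ∈ KG, a * b ∈ KG := by
    intro a ha b hb
    obtain ⟨ca, hca⟩ := (hmemiff a).mp ha
    obtain ⟨cb, hcb⟩ := (hmemiff b).mp hb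
    rw [← hca, ← hcb, Finset.sum_mul]
    refine Submodule.sum_mem _ fun i _ => ?_
    rw [Finset.mul_sum]
    refine Submodule.sum_mem _ fun j _ => ?_
    rw [smul_mul_assoc, mul_smul_comm, smul_smul, ← pow_add]
    exact Submodule.smul_mem _ _ (hgpow _)
  have hlamKG : lam ∈ KG := (hmemiff lam).mpr ⟨c, rfl⟩
  have h1KG : (1 : Rring k p) ∈ KG := by simpa using hgpow 0
  -- δ of an element of kG is x times an element of kG, preserving zero
  have hdelpow : ∀ j : ℕ, δ (g ^ j) = x * ((j : ℕ) • g ^ j) := by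
    intro j
    cases j with
    | zero => simp
    | succ m =>
      rw [Derivation.leibniz_pow, hg, Nat.add_sub_cancel]
      simp only [smul_eq_mul, nsmul_eq_mul, pow_succ]
      ring
  have hdelKG : ∀ a ∈ KG, ∃ b ∈ KG, δ a = x * b ∧ (a = 0 → b = 0) := by
    intro a ha
    by_cases h0 : a = 0
    · exact ⟨0, Submodule.zero_mem _, by simp [h0], fun _ => rfl⟩
    · obtain ⟨ca, hca⟩ := (hmemiff a).mp ha
      refine ⟨∑ j : Fin p, (ca j * ((j : ℕ) : k)) • g ^ (j : ℕ), ?_, ?_, fun h => absurd h h0⟩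
      · exact (hmemiff _).mpr ⟨_, rfl⟩
      · rw [← hca, map_sum, Finset.mul_sum]
        refine Finset.sum_congr rfl fun j _ => ?_
        rw [Derivation.map_smul, hdelpow]
        rw [← Nat.cast_smul_eq_nsmul k, mul_smul_comm, smul_smul, mul_smul_comm]
  -- main inductive claim
  have main : ∀ n : ℕ, 1 ≤ n → ∃ F : ℕ → Rring k p,
      (∀ m, F m ∈ KG) ∧ (∀ m, m % 2 ≠ n % 2 → F m = 0) ∧ (∀ m, n < m → F m = 0) ∧
      (⇑δ)^[n] g = (∑ m ∈ Finset.range (n + 1), F m * x ^ m) * g := by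
    intro n hn
    induction n, hn using Nat.le_induction with
    | base =>
      refine ⟨fun m => if m = 1 then 1 else 0, ?_, ?_, ?_, ?_⟩
      · intro m
        by_cases h : m = 1
        · simpa [h] using h1KG
        · simp [h]
      · intro m hm
        by_cases h : m = 1
        · subst h; omega
        · simp [h]
      · intro m hm
        simp [Nat.ne_of_gt hm]
      · simp [Finset.sum_range_succ, hg]
    | succ n hn ih =>
      obtain ⟨F, hFKG, hFpar, hFsupp, hFeq⟩ := ih
      choose G hGKG hGδ hG0 using fun m => hdelKG (F m) (hFKG m)
      set F' : ℕ → Rring k p := fun m =>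
        (if 1 ≤ m then G (m - 1) + F (m - 1) else 0) + ((m + 1 : ℕ) : k) • (F (m + 1) * lam)
        with hF'def
      refine ⟨F', ?_, ?_, ?_, ?_⟩
      · intro m
        refine Submodule.add_mem _ ?_ (Submodule.smul_mem _ _ (hmulKG _ (hFKG _) _ hlamKG))
        by_cases h : 1 ≤ m
        · rw [if_pos h]; exact Submodule.add_mem _ (hGKG _) (hFKG _)
        · rw [if_neg h]; exact Submodule.zero_mem _
      · intro m hm
        have h1 : F (m + 1) = 0 := hFpar _ (by omega)
        by_cases hm1 : 1 ≤ m
        · have h2 : F (m - 1) = 0 := hFpar _ (by omega)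
          have h3 : G (m - 1) = 0 := hG0 _ h2
          simp [hF'def, hm1, h1, h2, h3]
        · simp [hF'def, hm1, h1]
      · intro m hm
        have h1 : F (m + 1) = 0 := hFsupp _ (by omega)
        have h2 : F (m - 1) = 0 := hFsupp _ (by omega)
        have h3 : G (m - 1) = 0 := hG0 _ h2
        simp [hF'def, h1, h2, h3]
      · -- the main equality
        have hterm : ∀ m : ℕ,
            δ (F m * x ^ m) = F m * (m • (x ^ (m - 1) * lam)) + x ^ m * (x * G m) := by
          intro m
          rw [Derivation.leibniz, Derivation.leibniz_pow, hx, hGδ m]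
          simp only [smul_eq_mul]
        have hA : ∑ m ∈ Finset.range (n + 2), (if 1 ≤ m then G (m - 1) + F (m - 1) else 0) * x ^ m
            = ∑ m ∈ Finset.range (n + 1), (G m + F m) * x ^ (m + 1) := by
          rw [Finset.sum_range_succ']
          simp
        have hB : ∑ m ∈ Finset.range (n + 2), ((m + 1 : ℕ) : k) • (F (m + 1) * lam) * x ^ m
            = ∑ m ∈ Finset.range (n + 1), F m * (m • (x ^ (m - 1) * lam)) := by
          have hR : ∑ m ∈ Finset.range (n + 1), F m * (m • (x ^ (m - 1) * lam))
              = ∑ i ∈ Finset.range n, F (i + 1) * ((i + 1) • (x ^ i * lam)) := by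
            rw [Finset.sum_range_succ']
            simp
          have hL : ∑ m ∈ Finset.range (n + 2), ((m + 1 : ℕ) : k) • (F (m + 1) * lam) * x ^ m
              = ∑ m ∈ Finset.range n, ((m + 1 : ℕ) : k) • (F (m + 1) * lam) * x ^ m := by
            symm
            apply Finset.sum_subset (Finset.range_subset_range.mpr (by omega))
            intro m hm hnot
            simp only [Finset.mem_range] at hm hnot
            have : F (m + 1) = 0 := hFsupp _ (by omega)
            simp [this]
          rw [hL, hR]
          refine Finset.sum_congr rfl fun m _ => ?_
          rw [Nat.cast_smul_eq_nsmul, nsmul_eq_mul, nsmul_eq_mul]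
          push_cast
          ring
        have hsum : (∑ m ∈ Finset.range (n + 1 + 1), F' m * x ^ m)
            = (∑ m ∈ Finset.range (n + 1),
                (F m * (m • (x ^ (m - 1) * lam)) + x ^ m * (x * G m)))
              + (∑ m ∈ Finset.range (n + 1), F m * x ^ m) * x := by
          have expand : (∑ m ∈ Finset.range (n + 1 + 1), F' m * x ^ m)
              = (∑ m ∈ Finset.range (n + 2),
                  (if 1 ≤ m then G (m - 1) + F (m - 1) else 0) * x ^ m)
                + ∑ m ∈ Finset.range (n + 2), ((m + 1 : ℕ) : k) • (F (m + 1) * lam) * x ^ m := by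
            rw [← Finset.sum_add_distrib]
            exact Finset.sum_congr rfl fun m _ => by simp only [hF'def]; rw [add_mul]
          have hsplit : ∑ m ∈ Finset.range (n + 1), (G m + F m) * x ^ (m + 1)
              = (∑ m ∈ Finset.range (n + 1), x ^ m * (x * G m))
                + (∑ m ∈ Finset.range (n + 1), F m * x ^ m) * x := by
            rw [Finset.sum_mul, ← Finset.sum_add_distrib]
            exact Finset.sum_congr rfl fun m _ => by ring
          rw [expand, hA, hB, hsplit, Finset.sum_add_distrib]
          abel
        rw [Function.iterate_succ_apply', hFeq, Derivation.leibniz, hg, map_sum]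
        simp only [smul_eq_mul]
        rw [Finset.sum_congr rfl fun m _ => hterm m, hsum]
        ring
  -- now derive the statement
  intro n hn
  obtain ⟨F, hFKG, hFpar, hFsupp, hFeq⟩ := main n hn
  choose dd hdd using fun m => (hmemiff (F m)).mp (hFKG m)
  set d' : ℕ → Fin p → k := fun m => if m % 2 = n % 2 then dd m else 0 with hd'def
  have hd' : ∀ m : ℕ, ∑ j : Fin p, d' m j • g ^ (j : ℕ) = F m := by
    intro m
    by_cases h : m % 2 = n % 2
    · simp only [hd'def, if_pos h]; exact hdd m
    · simp only [hd'def, if_neg h]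
      rw [hFpar m h]
      simp
  refine ⟨⟨fun m => d' (m : ℕ), ?_, ?_⟩, ?_, ?_⟩
  · intro m hm
    simp [hd'def, hm]
  · rw [hFeq]
    congr 1
    rw [Fin.sum_univ_eq_sum_range
      (fun m => (∑ j : Fin p, d' m j • g ^ (j : ℕ)) * x ^ m) (n + 1)]
    exact Finset.sum_congr rfl fun m _ => by rw [hd' m]
  · rw [hFeq]
    exact dvd_mul_left g _
  · intro hoddn
    rw [hFeq]
    have h0 : F 0 = 0 := hFpar 0 (by have := Nat.odd_iff.mp hoddn; omega)
    have hS : (∑ m ∈ Finset.range (n + 1), F m * x ^ m)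
        = x * ∑ i ∈ Finset.range n, F (i + 1) * x ^ i := by
      rw [Finset.sum_range_succ', h0, Finset.mul_sum]
      simp only [zero_mul, add_zero]
      refine Finset.sum_congr rfl fun i _ => ?_
      ring
    rw [hS]
    exact ⟨∑ i ∈ Finset.range n, F (i + 1) * x ^ i, by ring⟩
end

section
/- (Recurrences for the André numbers.) Define integers A_{n,k} for n, k ≥ 0 by A_{0,0} = 1 and, for (n,k) ≠ (0,0), A_{n,k} = (n+1)·A_{n,k−1} + (k+1)·A_{n−1,k+1}, with the convention that any term with a negative index is 0. Then the A_{n,k} also satisfy the quadratic recursion: for all (n,k) ≠ (0,0), A_{n,k} = A_{n,k−1} + Σ_{l=0}^{n−1} Σ_{m=0}^{k} C(2n+k−1, 2l+m) · A_{l,m} · A_{n−1−l, k−m}, where C(·,·) denotes the binomial coefficient. -/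
/-!
Let `δ = g ∂ₓ + x g ∂_g` on `ℤ[x, g]`. The linear recursion says exactly that
`δ (∑_{2l+m=j} A_{l,m} xᵐ gˡ⁺¹) = ∑_{2l+m=j+1} A_{l,m} xᵐ gˡ⁺¹`, so `A_{n,k}` is the coefficient
of `xᵏ gⁿ⁺¹` in `δ^{2n+k} g`. Since `δ g = x g` and `δ x = g`, the general Leibniz rule gives
`δ^{M+1} g = δ^M (x g) = x δ^M g + ∑_{j<M} C(M,j) δ^{M-1-j} g · δ^j g`,
and comparing coefficients of `xᵏ gⁿ⁺¹` with `M = 2n+k-1` is the quadratic recursion.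
-/

open MvPolynomial Finset

theorem Derivation.iterate_apply_mul {R A : Type*} [CommSemiring R] [CommSemiring A]
    [Algebra R A] (D : Derivation R A A) (n : ℕ) (a b : A) :
    D^[n] (a * b) = ∑ ij ∈ antidiagonal n, n.choose ij.1 • (D^[ij.1] a * D^[ij.2] b) := by
  induction n with
  | zero => simp
  | succ n ih =>
    rw [sum_antidiagonal_choose_succ_nsmul (fun i j => D^[i] a * D^[j] b) n]
    simp only [Function.iterate_succ_apply', ih, map_sum, map_nsmul, Derivation.leibniz,
      smul_eq_mul, smul_add, sum_add_distrib, mul_comm (D^[_] b)]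
    congr 1
    refine sum_congr rfl fun ⟨i, j⟩ hij => ?_
    rw [n.choose_symm_of_eq_add (mem_antidiagonal.1 hij).symm]

lemma Finset.sum_range_ite_mem_Icc {M : Type*} [AddCommMonoid M] {N a d : ℕ} (h : a + d < N)
    (f : ℕ → M) :
    ∑ j ∈ range N, (if j ∈ Icc a (a + d) then f j else 0) = ∑ m ∈ range (d + 1), f (a + m) := by
  rw [sum_ite_mem, inter_eq_right.mpr fun j hj => by grind, ← Ico_add_one_right_eq_Icc,
    sum_Ico_eq_sum_range, add_assoc, Nat.add_sub_cancel_left]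

namespace Andre

noncomputable def xgExp (c b : ℕ) : Fin 2 →₀ ℕ := Finsupp.single 0 c + Finsupp.single 1 b

@[simp] lemma xgExp_apply_zero (c b : ℕ) : xgExp c b 0 = c := by simp [xgExp]
@[simp] lemma xgExp_apply_one (c b : ℕ) : xgExp c b 1 = b := by simp [xgExp]

lemma xgExp_inj {c b c' b' : ℕ} : xgExp c b = xgExp c' b' ↔ c = c' ∧ b = b' := by
  refine ⟨fun h => ⟨by simpa using congr($h 0), by simpa using congr($h 1)⟩, ?_⟩
  rintro ⟨rfl, rfl⟩; rfl

lemma xgExp_le_iff {c b c' b' : ℕ} : xgExp c b ≤ xgExp c' b' ↔ c ≤ c' ∧ b ≤ b' := by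
  simp [Finsupp.le_def, Fin.forall_fin_two]

lemma xgExp_add (c b c' b' : ℕ) : xgExp c b + xgExp c' b' = xgExp (c + c') (b + b') := by
  ext i; fin_cases i <;> simp

lemma xgExp_sub (c b c' b' : ℕ) : xgExp c b - xgExp c' b' = xgExp (c - c') (b - b') := by
  ext i; fin_cases i <;> simp [Finsupp.tsub_apply]

lemma single_zero_eq_xgExp : Finsupp.single (0 : Fin 2) 1 = xgExp 1 0 := by
  ext i; fin_cases i <;> simp

lemma single_one_eq_xgExp : Finsupp.single (1 : Fin 2) 1 = xgExp 0 1 := by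
  ext i; fin_cases i <;> simp
/-- `δ = g ∂ₓ + x g ∂_g`, with `x = X 0` and `g = X 1`. -/
noncomputable def andreDerivation :
    Derivation ℤ (MvPolynomial (Fin 2) ℤ) (MvPolynomial (Fin 2) ℤ) :=
  (X 1 : MvPolynomial (Fin 2) ℤ) • pderiv 0 + (X 0 * X 1 : MvPolynomial (Fin 2) ℤ) • pderiv 1

local notation "δ" => andreDerivation

lemma andreDerivation_X_zero : δ (X 0) = X 1 := by
  simp [andreDerivation, pderiv_X]

lemma andreDerivation_X_one : δ (X 1) = X 0 * X 1 := by
  simp [andreDerivation, pderiv_X]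

lemma X_zero_mul_monomial_xgExp (c b : ℕ) (a : ℤ) :
    X 0 * monomial (xgExp c b) a = monomial (xgExp (c + 1) b) a := by
  rw [X, monomial_mul, one_mul, single_zero_eq_xgExp, xgExp_add, add_comm 1, zero_add]

lemma X_one_mul_monomial_xgExp (c b : ℕ) (a : ℤ) :
    X 1 * monomial (xgExp c b) a = monomial (xgExp c (b + 1)) a := by
  rw [X, monomial_mul, one_mul, single_one_eq_xgExp, xgExp_add, add_comm 1, zero_add]

lemma andreDerivation_monomial (c b : ℕ) (a : ℤ) :
    δ (monomial (xgExp c (b + 1)) a) =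
      monomial (xgExp (c - 1) (b + 2)) (c * a) +
        monomial (xgExp (c + 1) (b + 1)) ((b + 1) * a) := by
  simp only [andreDerivation, Derivation.add_apply, Derivation.smul_apply, pderiv_monomial,
    smul_eq_mul, single_zero_eq_xgExp, single_one_eq_xgExp, xgExp_sub, xgExp_apply_zero,
    xgExp_apply_one, mul_assoc, X_zero_mul_monomial_xgExp, X_one_mul_monomial_xgExp,
    Nat.sub_zero, Nat.add_sub_cancel, mul_comm a]
  push_cast
  rfl

lemma iterate_andreDerivation_succ_X_one (M : ℕ) :
    δ^[M + 1] (X 1) = X 0 * δ^[M] (X 1) +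
      ∑ j ∈ range M, M.choose j • (δ^[M - 1 - j] (X 1) * δ^[j] (X 1)) := by
  rw [Function.iterate_succ_apply, andreDerivation_X_one, Derivation.iterate_apply_mul,
    ← Finset.Nat.sum_antidiagonal_swap]
  simp only [Prod.fst_swap, Prod.snd_swap]
  rw [Finset.Nat.sum_antidiagonal_eq_sum_range_succ
      (fun j i => M.choose i • (δ^[i] (X 0) * δ^[j] (X 1))), sum_range_succ, add_comm,
    Nat.sub_self, Nat.choose_zero_right, one_smul, Function.iterate_zero_apply]
  congr 1
  refine sum_congr rfl fun j hj => ?_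
  obtain ⟨i, rfl⟩ : ∃ i, M = i + 1 + j := ⟨M - 1 - j, by grind⟩
  rw [Nat.add_sub_cancel, Function.iterate_succ_apply, andreDerivation_X_zero,
    Nat.choose_symm_add, show i + 1 + j - 1 - j = i by omega]

section
variable (A : ℕ → ℕ → ℤ)

def AndreRecursion : Prop :=
  ∀ n k : ℕ, (n, k) ≠ (0, 0) →
    A n k = (n + 1) * (if k = 0 then 0 else A n (k - 1)) +
      (k + 1) * (if n = 0 then 0 else A (n - 1) (k + 1))

noncomputable def andrePoly (j : ℕ) : MvPolynomial (Fin 2) ℤ :=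
  ∑ l ∈ range (j / 2 + 1), monomial (xgExp (j - 2 * l) (l + 1)) (A l (j - 2 * l))

lemma coeff_andrePoly (j c b : ℕ) :
    coeff (xgExp c (b + 1)) (andrePoly A j) = if 2 * b + c = j then A b c else 0 := by
  rw [andrePoly, coeff_sum,
    sum_congr rfl (g := fun l => if b = l then (if 2 * b + c = j then A b c else 0) else 0)]
  · simp only [sum_ite_eq, mem_range]
    grind
  · intro l hl
    simp only [coeff_monomial, xgExp_inj, mem_range] at hl ⊢
    grind

lemma coeff_xgExp_zero_andrePoly (j c : ℕ) : coeff (xgExp c 0) (andrePoly A j) = 0 := by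
  rw [andrePoly, coeff_sum]
  exact sum_eq_zero fun l _ => by rw [coeff_monomial, if_neg (by simp [xgExp_inj])]

lemma coeff_X_zero_mul_andrePoly {n k j : ℕ} (h : j + 1 = 2 * n + k) :
    coeff (xgExp k (n + 1)) (X 0 * andrePoly A j) = if k = 0 then 0 else A n (k - 1) := by
  simp only [coeff_X_mul', Finsupp.mem_support_iff, xgExp_apply_zero, single_zero_eq_xgExp,
    xgExp_sub, Nat.sub_zero, coeff_andrePoly]
  grind

lemma coeff_andrePoly_mul_andrePoly {n k i j : ℕ} (h : i + j + 2 = 2 * n + k) :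
    coeff (xgExp k (n + 1)) (andrePoly A i * andrePoly A j) =
      ∑ l ∈ range n, if j ∈ Icc (2 * l) (2 * l + k) then
        A (n - 1 - l) (k - (j - 2 * l)) * A l (j - 2 * l) else 0 := by
  have hterm : ∀ l, 2 * l ≤ j →
      coeff (xgExp k (n + 1))
          (andrePoly A i * monomial (xgExp (j - 2 * l) (l + 1)) (A l (j - 2 * l))) =
        if l < n ∧ j ≤ 2 * l + k then A (n - 1 - l) (k - (j - 2 * l)) * A l (j - 2 * l)
        else 0 := by
    intro l hl
    simp only [coeff_mul_monomial', xgExp_le_iff, xgExp_sub]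
    rcases lt_or_ge l n with hln | hln
    · rw [show n + 1 - (l + 1) = n - 1 - l + 1 by omega, coeff_andrePoly]
      split_ifs <;> first | rfl | omega
    · rcases hln.eq_or_lt with rfl | hln
      · simp [coeff_xgExp_zero_andrePoly]
      · grind
  rw [andrePoly.eq_1 A j, mul_sum, coeff_sum]
  refine sum_congr_of_eq_on_inter ?_ ?_ ?_ <;> intro l hl₁ hl₂ <;>
    simp only [mem_range] at hl₁ hl₂
  · rw [hterm l (by omega), if_neg (by omega)]
  · rw [if_neg (by simp only [mem_Icc]; omega)]
  · rw [hterm l (by omega)]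
    simp only [mem_Icc]
    grind

lemma andreDerivation_andrePoly (hrec : AndreRecursion A) (j : ℕ) :
    δ (andrePoly A j) = andrePoly A (j + 1) := by
  have hsplit : andrePoly A (j + 1) =
      (∑ l ∈ range ((j + 1) / 2 + 1), monomial (xgExp (j + 1 - 2 * l) (l + 1))
        ((l + 1) * if j + 1 - 2 * l = 0 then 0 else A l (j + 1 - 2 * l - 1))) +
      ∑ l ∈ range ((j + 1) / 2 + 1), monomial (xgExp (j + 1 - 2 * l) (l + 1))
        ((j + 1 - 2 * l + 1 : ℕ) * if l = 0 then 0 else A (l - 1) (j + 1 - 2 * l + 1)) := by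
    rw [andrePoly, ← sum_add_distrib]
    refine sum_congr rfl fun l hl => ?_
    rw [← map_add, hrec l _ (by simp only [mem_range] at hl; grind)]
    push_cast
    rfl
  rw [andrePoly, map_sum, hsplit]
  simp only [andreDerivation_monomial, sum_add_distrib]
  rw [add_comm]
  congr 1
  · refine sum_congr_of_eq_on_inter ?_ ?_ ?_ <;> intro l hl₁ hl₂ <;>
      simp only [mem_range] at hl₁ hl₂
    · omega
    · simp [show j + 1 - 2 * l = 0 by omega]
    · rw [if_neg (by omega), show j + 1 - 2 * l = j - 2 * l + 1 by omega, Nat.add_sub_cancel]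
  · rw [sum_range_succ' _ ((j + 1) / 2)]
    simp only [if_pos, mul_zero, monomial_zero, add_zero]
    refine sum_congr_of_eq_on_inter ?_ ?_ ?_ <;> intro l hl₁ hl₂ <;>
      simp only [mem_range] at hl₁ hl₂
    · simp [show j - 2 * l = 0 by omega]
    · omega
    · rw [if_neg l.succ_ne_zero, Nat.add_sub_cancel,
        show j + 1 - 2 * (l + 1) + 1 = j - 2 * l by omega,
        show j + 1 - 2 * (l + 1) = j - 2 * l - 1 by omega]

lemma iterate_andreDerivation_X_one (h00 : A 0 0 = 1) (hrec : AndreRecursion A) (j : ℕ) :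
    δ^[j] (X 1) = andrePoly A j := by
  induction j with
  | zero => simp [andrePoly, h00, xgExp, X]
  | succ j ih => rw [Function.iterate_succ_apply', ih, andreDerivation_andrePoly A hrec]

end

end Andre

open Andre

/-- **Recurrences for the André numbers.**  If `A : ℕ → ℕ → ℤ` satisfies `A 0 0 = 1` and the
linear recursion `A n k = (n+1)·A n (k-1) + (k+1)·A (n-1) (k+1)` for `(n,k) ≠ (0,0)` (terms
with a negative index being `0`), then `A` also satisfies the quadratic recursion
`A n k = A n (k-1) + ∑_{l=0}^{n-1} ∑_{m=0}^{k} C(2n+k-1, 2l+m) · A l m · A (n-1-l) (k-m)`. -/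
theorem andre_quadratic_recursion (A : ℕ → ℕ → ℤ) (h00 : A 0 0 = 1)
    (hrec : ∀ n k : ℕ, (n, k) ≠ (0, 0) →
      A n k = (n + 1) * (if k = 0 then 0 else A n (k - 1)) +
        (k + 1) * (if n = 0 then 0 else A (n - 1) (k + 1))) :
    ∀ n k : ℕ, (n, k) ≠ (0, 0) →
      A n k = (if k = 0 then 0 else A n (k - 1)) +
        ∑ l ∈ Finset.range n, ∑ m ∈ Finset.range (k + 1),
          ((2 * n + k - 1).choose (2 * l + m) : ℤ) * A l m * A (n - 1 - l) (k - m) := by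
  intro n k hnk
  obtain ⟨M, hM⟩ : ∃ M, 2 * n + k = M + 1 := ⟨2 * n + k - 1, by grind⟩
  have hδ := iterate_andreDerivation_X_one A h00 hrec
  have hcoeff : A n k = coeff (xgExp k (n + 1)) (andreDerivation^[M + 1] (X 1)) := by
    rw [hδ, coeff_andrePoly, if_pos hM]
  rw [hcoeff, iterate_andreDerivation_succ_X_one, coeff_add, hδ,
    coeff_X_zero_mul_andrePoly A hM.symm, show 2 * n + k - 1 = M by omega, coeff_sum]
  congr 1
  rw [sum_congr rfl fun j hj => by
    rw [coeff_smul, hδ, hδ, coeff_andrePoly_mul_andrePoly A (by grind), smul_sum], sum_comm]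
  refine sum_congr rfl fun l hl => ?_
  simp only [smul_ite, smul_zero]
  rw [sum_range_ite_mem_Icc (by grind)]
  refine sum_congr rfl fun m hm => ?_
  rw [Nat.add_sub_cancel_left, nsmul_eq_mul]
  ring
end

section
/- Let δ be the derivation of the polynomial ring ℤ[x,g] determined by δ(x) = g² and δ(g) = xg. Then for every n ≥ 0, evaluating at x = 1, g = 1 gives δ^n(g)(1,1) = n! and δ^n(x)(1,1) = n!. (That is, the sums of the integer coefficients of δ^n(g) and of δ^n(x) both equal n!.) -/
/-!
Let `E = ∑ xᵢ ∂ᵢ` be the Euler derivation. Since `δ` maps each variable to a quadratic form,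
`⁅E, δ⁆ = δ`, and hence `E (δⁿ xᵢ) = (n + 1) δⁿ xᵢ`. After evaluation at `(1, 1)` the
derivations `δ` and `E` agree on the variables, hence everywhere, so
`δⁿ⁺¹ xᵢ (1, 1) = (E δⁿ xᵢ)(1, 1) = (n + 1) · δⁿ xᵢ (1, 1)`.
-/

open MvPolynomial

namespace Derivation

theorem sum_apply {R A M ι : Type*} [CommSemiring R] [CommSemiring A] [Algebra R A]
    [AddCommMonoid M] [Module A M] [Module R M] (s : Finset ι) (D : ι → Derivation R A M)
    (a : A) : (∑ i ∈ s, D i) a = ∑ i ∈ s, D i a := by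
  simp only [← coeFnAddMonoidHom_apply, map_sum, Finset.sum_apply]

theorem apply_iterate_of_lie_eq_smul {R A : Type*} [CommRing R] [CommRing A] [Algebra R A]
    {E D : Derivation R A A} {k c : ℕ} (hED : ⁅E, D⁆ = k • D) {a : A} (ha : E a = c • a)
    (n : ℕ) : E (D^[n] a) = (c + n * k) • D^[n] a := by
  have hcomm : ∀ b, E (D b) = D (E b) + k • D b := fun b => by
    rw [← smul_apply, ← hED, commutator_apply]; abel
  induction n with
  | zero => simpa using ha
  | succ n ih =>
    rw [Function.iterate_succ_apply', hcomm, ih, map_nsmul, ← add_smul]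
    ring_nf

end Derivation

namespace MvPolynomial

section CommSemiring

variable {R σ : Type*} [CommSemiring R]

theorem apply_derivation_eq_of_apply_X {B : Type*} [CommSemiring B]
    (φ : MvPolynomial σ R →+* B) {D D' : Derivation R (MvPolynomial σ R) (MvPolynomial σ R)}
    (h : ∀ i, φ (D (X i)) = φ (D' (X i))) (p : MvPolynomial σ R) : φ (D p) = φ (D' p) := by
  induction p using MvPolynomial.induction_on with
  | C a => simp [derivation_C]
  | add p q hp hq => simp [hp, hq]
  | mul_X p i hp => simp [Derivation.leibniz, h, hp]

variable (R σ) in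
noncomputable def eulerDerivation : Derivation R (MvPolynomial σ R) (MvPolynomial σ R) :=
  mkDerivation R X

@[simp]
theorem eulerDerivation_X (i : σ) : eulerDerivation R σ (X i) = X i :=
  mkDerivation_X R X i

variable [Fintype σ]

theorem eulerDerivation_eq_sum_smul_pderiv :
    eulerDerivation R σ = ∑ i, (X i : MvPolynomial σ R) • pderiv i :=
  derivation_ext fun i => by
    classical simp [Derivation.sum_apply, pderiv_X, Pi.single_apply]

theorem IsHomogeneous.eulerDerivation_apply {n : ℕ} {p : MvPolynomial σ R}
    (hp : p.IsHomogeneous n) : eulerDerivation R σ p = n • p := by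
  simp [eulerDerivation_eq_sum_smul_pderiv, Derivation.sum_apply, ← hp.sum_X_mul_pderiv]

end CommSemiring

section CommRing

variable {R σ : Type*} [CommRing R] [Fintype σ]

theorem lie_eulerDerivation_of_isHomogeneous
    {D : Derivation R (MvPolynomial σ R) (MvPolynomial σ R)} {k : ℕ}
    (hD : ∀ i, (D (X i)).IsHomogeneous (k + 1)) : ⁅eulerDerivation R σ, D⁆ = k • D :=
  derivation_ext fun i => by
    rw [Derivation.commutator_apply, (hD i).eulerDerivation_apply, eulerDerivation_X,
      Derivation.smul_apply, add_smul, one_smul, add_sub_cancel_right]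

theorem eval_one_iterate_X {D : Derivation R (MvPolynomial σ R) (MvPolynomial σ R)}
    (hD : ∀ i, (D (X i)).IsHomogeneous 2) (hD1 : ∀ i, eval (fun _ => 1) (D (X i)) = 1)
    (i : σ) (n : ℕ) : eval (fun _ => 1) (D^[n] (X i)) = n.factorial := by
  have heval : ∀ p, eval (fun _ => 1) (D p) = eval (fun _ => 1) (eulerDerivation R σ p) :=
    apply_derivation_eq_of_apply_X _ fun j => by simp [hD1]
  have hweight := Derivation.apply_iterate_of_lie_eq_smul
    (lie_eulerDerivation_of_isHomogeneous (k := 1) hD) (a := X i) (c := 1) (by simp)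
  induction n with
  | zero => simp
  | succ n ih =>
    rw [Function.iterate_succ_apply', heval, hweight, map_nsmul, ih, Nat.factorial_succ]
    push_cast
    ring

end CommRing

end MvPolynomial

/-- If `δ` is the derivation of `ℤ[x,g]` with `δ(x) = g²` and `δ(g) = xg`, then for every
`n ≥ 0`, evaluating at `x = 1, g = 1` gives `δ^n(g)(1,1) = n!` and `δ^n(x)(1,1) = n!`;
i.e. the sums of the integer coefficients of `δ^n(g)` and of `δ^n(x)` both equal `n!`. -/
theorem eval_delta_factorial
    (δ : Derivation ℤ (MvPolynomial (Fin 2) ℤ) (MvPolynomial (Fin 2) ℤ))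
    (hx : δ (MvPolynomial.X 0) = MvPolynomial.X 1 ^ 2)
    (hg : δ (MvPolynomial.X 1) = MvPolynomial.X 0 * MvPolynomial.X 1) :
    ∀ n : ℕ,
      MvPolynomial.eval (fun _ => (1 : ℤ)) ((⇑δ)^[n] (MvPolynomial.X 1)) = n.factorial ∧
      MvPolynomial.eval (fun _ => (1 : ℤ)) ((⇑δ)^[n] (MvPolynomial.X 0)) = n.factorial := by
  have hhom : ∀ i, (δ (X i)).IsHomogeneous 2 := by
    intro i
    fin_cases i
    · simpa [hx] using isHomogeneous_X_pow (R := ℤ) (1 : Fin 2) 2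
    · simpa [hg] using (isHomogeneous_X ℤ (0 : Fin 2)).mul (isHomogeneous_X ℤ (1 : Fin 2))
  have heval : ∀ i, eval (fun _ => (1 : ℤ)) (δ (X i)) = 1 := by
    intro i
    fin_cases i <;> simp [hx, hg]
  exact fun n => ⟨eval_one_iterate_X hhom heval 1 n, eval_one_iterate_X hhom heval 0 n⟩
end

section
/- Let λ = Σ_{i=1}^{p−1} c_i g^i ∈ kG (no constant term) and set c_λ := Σ_{i=1}^{p−1} c_i ∈ k. If c_λ = 0 (i.e. λ is a zero-divisor in kG), then the quotient of H_λ by the two-sided ideal generated by g − 1 is isomorphic as a k-algebra to the polynomial ring k[y]. If c_λ ≠ 0 (i.e. λ is invertible in kG), then the quotient of H_λ by the two-sided ideal generated by g − 1 is the zero ring. -/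
set_option synthInstance.maxHeartbeats 1000000
set_option maxHeartbeats 1000000

inductive Gen : Type
  | x | y | g

noncomputable abbrev Xf (k : Type) [Field k] : FreeAlgebra k Gen := FreeAlgebra.ι k Gen.x
noncomputable abbrev Yf (k : Type) [Field k] : FreeAlgebra k Gen := FreeAlgebra.ι k Gen.y
noncomputable abbrev Gf (k : Type) [Field k] : FreeAlgebra k Gen := FreeAlgebra.ι k Gen.g

/-- The relations defining `H_λ`, where `λ = ∑ i, c i • g ^ i`. -/
inductive HRel (k : Type) [Field k] (p : ℕ) (c : Fin p → k) :
    FreeAlgebra k Gen → FreeAlgebra k Gen → Prop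
  | gp : HRel k p c (Gf k ^ p) 1
  | gx : HRel k p c (Gf k * Xf k) (Xf k * Gf k)
  | gy : HRel k p c (Gf k * Yf k) (Yf k * Gf k + Xf k * Gf k)
  | xy : HRel k p c (Xf k * Yf k) (Yf k * Xf k + ∑ i : Fin p, c i • Gf k ^ (i : ℕ))

/-- The algebra `H_λ`. -/
noncomputable abbrev Halg (k : Type) [Field k] (p : ℕ) (c : Fin p → k) : Type :=
  RingQuot (HRel k p c)

noncomputable abbrev xH (k : Type) [Field k] (p : ℕ) (c : Fin p → k) : Halg k p c :=
  RingQuot.mkAlgHom k (HRel k p c) (Xf k)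
noncomputable abbrev yH (k : Type) [Field k] (p : ℕ) (c : Fin p → k) : Halg k p c :=
  RingQuot.mkAlgHom k (HRel k p c) (Yf k)
noncomputable abbrev gH (k : Type) [Field k] (p : ℕ) (c : Fin p → k) : Halg k p c :=
  RingQuot.mkAlgHom k (HRel k p c) (Gf k)

/-!
Once `g = 1`, the relation `g y = y g + x g` reads `y = y + x`, so `x = 0`, and then
`x y - y x = λ` reads `0 = c_λ`. Hence the quotient is zero if `c_λ ≠ 0`. If `c_λ = 0`,
the assignment `x ↦ 0`, `y ↦ Y`, `g ↦ 1` respects every relation, so it defines a map to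
`k[Y]` inverse to `Y ↦ y`.
-/

open Polynomial

namespace Halg

variable {k : Type} [Field k] {p : ℕ} {c : Fin p → k}

theorem gH_mul_yH :
    gH k p c * yH k p c = yH k p c * gH k p c + xH k p c * gH k p c := by
  simpa using RingQuot.mkAlgHom_rel k (HRel.gy (k := k) (p := p) (c := c))

theorem xH_mul_yH :
    xH k p c * yH k p c = yH k p c * xH k p c + ∑ i : Fin p, c i • gH k p c ^ (i : ℕ) := by
  simpa [map_sum] using RingQuot.mkAlgHom_rel k (HRel.xy (k := k) (p := p) (c := c))

section SpecializeGOne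

variable {B : Type} [Ring B] [Algebra k B] {f : Halg k p c →ₐ[k] B}

theorem map_xH_eq_zero_of_map_gH_eq_one (hf : f (gH k p c) = 1) : f (xH k p c) = 0 := by
  simpa [hf] using congrArg f gH_mul_yH

theorem sum_smul_one_eq_zero_of_map_gH_eq_one (hf : f (gH k p c) = 1) :
    (∑ i : Fin p, c i) • (1 : B) = 0 := by
  simpa [map_sum, hf, map_xH_eq_zero_of_map_gH_eq_one hf, ← Finset.sum_smul, eq_comm] using
    congrArg f xH_mul_yH

theorem subsingleton_of_map_gH_eq_one (hf : f (gH k p c) = 1) (hc : ∑ i : Fin p, c i ≠ 0) :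
    Subsingleton B :=
  subsingleton_of_zero_eq_one
    ((smul_eq_zero.mp (sum_smul_one_eq_zero_of_map_gH_eq_one hf)).resolve_left hc).symm

end SpecializeGOne

variable {B : Type} [Semiring B] [Algebra k B]

def genValuesGOne (b : B) : Gen → B
  | .x => 0
  | .y => b
  | .g => 1

variable (hc : ∑ i : Fin p, c i = 0)

noncomputable def liftGOne (b : B) : Halg k p c →ₐ[k] B :=
  RingQuot.liftAlgHom k ⟨FreeAlgebra.lift k (genValuesGOne b), by
    rintro _ _ (_ | _ | _ | _) <;> simp [genValuesGOne, map_sum, ← Finset.sum_smul, hc]⟩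

@[simp]
theorem liftGOne_yH (b : B) : liftGOne hc b (yH k p c) = b := by
  simp [liftGOne, genValuesGOne]

@[simp]
theorem liftGOne_gH (b : B) : liftGOne hc b (gH k p c) = 1 := by
  simp [liftGOne, genValuesGOne]

end Halg

abbrev HalgModG (k : Type) [Field k] (p : ℕ) (c : Fin p → k) : Type :=
  RingQuot fun a b : Halg k p c => a = gH k p c ∧ b = 1

namespace HalgModG

variable {k : Type} [Field k] {p : ℕ} {c : Fin p → k}

noncomputable abbrev mk (k : Type) [Field k] (p : ℕ) (c : Fin p → k) :
    Halg k p c →ₐ[k] HalgModG k p c :=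
  RingQuot.mkAlgHom k _

theorem mk_gH : mk k p c (gH k p c) = 1 := by
  simpa using RingQuot.mkAlgHom_rel k (s := fun a b : Halg k p c => a = gH k p c ∧ b = 1)
    ⟨rfl, rfl⟩

theorem mk_xH : mk k p c (xH k p c) = 0 :=
  Halg.map_xH_eq_zero_of_map_gH_eq_one (B := HalgModG k p c) (f := mk k p c) mk_gH

theorem algHom_ext {B : Type} [Semiring B] [Algebra k B] {f f' : HalgModG k p c →ₐ[k] B}
    (h : f (mk k p c (yH k p c)) = f' (mk k p c (yH k p c))) : f = f' := by
  apply RingQuot.ringQuot_ext'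
  apply RingQuot.ringQuot_ext'
  apply FreeAlgebra.hom_ext
  funext t
  cases t
  · change f (mk k p c (xH k p c)) = f' (mk k p c (xH k p c))
    rw [mk_xH, map_zero, map_zero]
  · exact h
  · change f (mk k p c (gH k p c)) = f' (mk k p c (gH k p c))
    rw [mk_gH, map_one, map_one]

variable (hc : ∑ i : Fin p, c i = 0)

noncomputable def toPolynomial : HalgModG k p c →ₐ[k] k[X] :=
  RingQuot.liftAlgHom k ⟨Halg.liftGOne hc X, by
    rintro _ _ ⟨rfl, rfl⟩; simp⟩

noncomputable def equivPolynomial : HalgModG k p c ≃ₐ[k] k[X] :=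
  AlgEquiv.ofAlgHom (toPolynomial hc) (aeval (mk k p c (yH k p c)))
    (by ext; simp [toPolynomial])
    (algHom_ext (by simp [toPolynomial]))

end HalgModG

theorem quotient_by_g_sub_one_general (k : Type) [Field k] (p : ℕ) (c : Fin p → k) :
    ((∑ i : Fin p, c i) = 0 →
      Nonempty
        ((RingQuot fun a b : Halg k p c => a = gH k p c ∧ b = 1) ≃ₐ[k] Polynomial k)) ∧
    ((∑ i : Fin p, c i) ≠ 0 →
      Subsingleton (RingQuot fun a b : Halg k p c => a = gH k p c ∧ b = 1)) :=
  ⟨fun hc => ⟨HalgModG.equivPolynomial hc⟩,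
    Halg.subsingleton_of_map_gH_eq_one (B := HalgModG k p c) HalgModG.mk_gH⟩

/-- Let `λ = ∑_{i=1}^{p-1} c_i g^i` (no constant term) and `c_λ = ∑ c_i`.  If `c_λ = 0`
(`λ` a zero-divisor in `kG`), the quotient of `H_λ` by the two-sided ideal generated by
`g - 1` is isomorphic to the polynomial ring `k[y]`; if `c_λ ≠ 0` (`λ` invertible in `kG`),
this quotient is the zero ring. -/
theorem quotient_by_g_sub_one (k : Type) [Field k] [IsAlgClosed k] (p : ℕ) (hp : p.Prime)
    (hodd : Odd p) [CharP k p] (c : Fin p → k) (hc0 : c ⟨0, hp.pos⟩ = 0) :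
    ((∑ i : Fin p, c i) = 0 →
      Nonempty
        ((RingQuot fun a b : Halg k p c => a = gH k p c ∧ b = 1) ≃ₐ[k] Polynomial k)) ∧
    ((∑ i : Fin p, c i) ≠ 0 →
      Subsingleton (RingQuot fun a b : Halg k p c => a = gH k p c ∧ b = 1)) :=
  quotient_by_g_sub_one_general k p c
end

section
/- A one-dimensional representation of H_λ (i.e. a k-algebra homomorphism H_λ → k) exists if and only if λ is nilpotent in kG, equivalently if and only if Σ_{i=0}^{p−1} c_i = 0. In that case, for every β ∈ k the assignment x ↦ 0, g ↦ 1, y ↦ β defines a k-algebra homomorphism H_λ → k, and these give infinitely many pairwise distinct one-dimensional (simple) representations. Moreover, on any one-dimensional representation x necessarily acts by 0 and g by 1. -/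
set_option synthInstance.maxHeartbeats 1000000
set_option maxHeartbeats 1000000

-- aux: evaluation map
noncomputable def evalF (k : Type) [Field k] (β : k) : FreeAlgebra k Gen →ₐ[k] k :=
  FreeAlgebra.lift k (fun t => match t with | Gen.x => 0 | Gen.y => β | Gen.g => 1)

lemma evalF_rel (k : Type) [Field k] (p : ℕ) (c : Fin p → k) (hs : (∑ i : Fin p, c i) = 0)
    (β : k) : ∀ ⦃a b : FreeAlgebra k Gen⦄, HRel k p c a b → evalF k β a = evalF k β b := by
  intro a b h
  induction h with
  | gp => simp [evalF]
  | gx => simp [evalF]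
  | gy => simp [evalF]
  | xy => simp [evalF, hs]

noncomputable def phiB (k : Type) [Field k] (p : ℕ) (c : Fin p → k)
    (hs : (∑ i : Fin p, c i) = 0) (β : k) : Halg k p c →ₐ[k] k :=
  RingQuot.liftAlgHom k ⟨evalF k β, evalF_rel k p c hs β⟩

lemma phiB_x (k : Type) [Field k] (p : ℕ) (c : Fin p → k) (hs : (∑ i : Fin p, c i) = 0)
    (β : k) : phiB k p c hs β (xH k p c) = 0 := by
  simp [phiB, xH, RingQuot.liftAlgHom_mkAlgHom_apply, evalF]

lemma phiB_g (k : Type) [Field k] (p : ℕ) (c : Fin p → k) (hs : (∑ i : Fin p, c i) = 0)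
    (β : k) : phiB k p c hs β (gH k p c) = 1 := by
  simp [phiB, gH, RingQuot.liftAlgHom_mkAlgHom_apply, evalF]

lemma phiB_y (k : Type) [Field k] (p : ℕ) (c : Fin p → k) (hs : (∑ i : Fin p, c i) = 0)
    (β : k) : phiB k p c hs β (yH k p c) = β := by
  simp [phiB, yH, RingQuot.liftAlgHom_mkAlgHom_apply, evalF]

lemma forced (k : Type) [Field k] (p : ℕ) (hp : p.Prime) [CharP k p] (c : Fin p → k)
    (φ : Halg k p c →ₐ[k] k) : φ (xH k p c) = 0 ∧ φ (gH k p c) = 1 := by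
  haveI := Fact.mk hp
  have hg : φ (gH k p c) = 1 := by
    have h1 : (gH k p c) ^ p = 1 := by
      have := RingQuot.mkAlgHom_rel k (HRel.gp (k := k) (c := c))
      simpa [gH, map_pow] using this
    have : φ (gH k p c) ^ p = 1 := by rw [← map_pow, h1, map_one]
    have h2 : (φ (gH k p c) - 1) ^ p = 0 := by
      rw [sub_pow_char, this, one_pow, sub_self]
    exact sub_eq_zero.mp (pow_eq_zero_iff hp.ne_zero |>.mp h2)
  refine ⟨?_, hg⟩
  have hrel := RingQuot.mkAlgHom_rel k (HRel.gy (k := k) (p := p) (c := c))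
  have : φ (gH k p c) * φ (yH k p c)
      = φ (yH k p c) * φ (gH k p c) + φ (xH k p c) * φ (gH k p c) := by
    have := congrArg φ (by simpa [gH, xH, yH, map_mul, map_add] using hrel :
      gH k p c * yH k p c = yH k p c * gH k p c + xH k p c * gH k p c)
    simpa [map_mul, map_add] using this
  rw [hg] at this
  linear_combination -this

lemma forced_sum (k : Type) [Field k] (p : ℕ) (hp : p.Prime) [CharP k p] (c : Fin p → k)
    (φ : Halg k p c →ₐ[k] k) : (∑ i : Fin p, c i) = 0 := by
  obtain ⟨hx, hg⟩ := forced k p hp c φ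
  have hrel := RingQuot.mkAlgHom_rel k (HRel.xy (k := k) (p := p) (c := c))
  have h : xH k p c * yH k p c
      = yH k p c * xH k p c + ∑ i : Fin p, c i • gH k p c ^ (i : ℕ) := by
    simpa [gH, xH, yH, map_mul, map_add, map_sum, map_smul, map_pow] using hrel
  have := congrArg φ h
  simp [map_mul, map_add, map_sum, map_smul, map_pow, hx, hg] at this
  exact this.symm


/-- A one-dimensional representation of `H_λ` (a `k`-algebra homomorphism `H_λ → k`) exists
iff `λ` is nilpotent in `kG`, i.e. iff `∑ c_i = 0`.  In that case, for every `β ∈ k` the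
assignment `x ↦ 0, g ↦ 1, y ↦ β` is an algebra homomorphism, giving infinitely many pairwise
distinct one-dimensional representations.  Moreover, on any one-dimensional representation
`x` acts by `0` and `g` by `1`. -/
theorem one_dimensional_reps (k : Type) [Field k] [IsAlgClosed k] (p : ℕ) (hp : p.Prime)
    (hodd : Odd p) [CharP k p] (c : Fin p → k) :
    (Nonempty (Halg k p c →ₐ[k] k) ↔ (∑ i : Fin p, c i) = 0) ∧
    ((∑ i : Fin p, c i) = 0 →
      ∀ β : k, ∃ φ : Halg k p c →ₐ[k] k,
        φ (xH k p c) = 0 ∧ φ (gH k p c) = 1 ∧ φ (yH k p c) = β) ∧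
    ((∑ i : Fin p, c i) = 0 →
      ∀ β β' : k, β ≠ β' →
        ∀ φ φ' : Halg k p c →ₐ[k] k, φ (yH k p c) = β → φ' (yH k p c) = β' → φ ≠ φ') ∧
    ((∑ i : Fin p, c i) = 0 → Infinite (Halg k p c →ₐ[k] k)) ∧
    (∀ φ : Halg k p c →ₐ[k] k, φ (xH k p c) = 0 ∧ φ (gH k p c) = 1) := by
  refine ⟨⟨fun ⟨φ⟩ => forced_sum k p hp c φ, fun hs => ⟨phiB k p c hs 0⟩⟩, ?_, ?_, ?_, ?_⟩
  · intro hs β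
    exact ⟨phiB k p c hs β, phiB_x k p c hs β, phiB_g k p c hs β, phiB_y k p c hs β⟩
  · intro hs β β' hne φ φ' hy hy' h
    exact hne (by rw [← hy, ← hy', h])
  · intro hs
    exact Infinite.of_injective (phiB k p c hs) fun a b hab => by
      have := congrArg (fun ψ => ψ (yH k p c)) hab
      simpa [phiB_y] using this
  · exact forced k p hp c
end

section
/- Let μ = Σ_{a=1}^{p−1} m_a (g^a − 1) ∈ kG be an arbitrary element of the augmentation ideal (an arbitrary zero-divisor of kG), and let D be the k-linear derivation of kG with D(g) = g. Then μ^{p−1} ≠ 0 if and only if D(μ) is invertible in kG. Moreover, if D(μ) is a zero-divisor in kG, then μ^{(p+1)/2} = 0. -/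
set_option synthInstance.maxHeartbeats 1000000
set_option maxHeartbeats 1000000

noncomputable abbrev kGring (k : Type) [Field k] (p : ℕ) : Type :=
  Polynomial k ⧸ Ideal.span {(Polynomial.X : Polynomial k) ^ p - 1}

noncomputable abbrev gE (k : Type) [Field k] (p : ℕ) : kGring k p :=
  Ideal.Quotient.mk _ Polynomial.X

open Polynomial

section Aux
variable (k : Type) [Field k] (p : ℕ)

/-- The augmentation homomorphism. -/
noncomputable def epsA : kGring k p →+* k :=
  Ideal.Quotient.lift _ (Polynomial.evalRingHom 1) (by
    intro a ha
    rw [Ideal.mem_span_singleton] at ha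
    obtain ⟨c, rfl⟩ := ha
    simp)

variable {k p}

lemma epsA_mk (f : Polynomial k) :
    epsA k p (Ideal.Quotient.mk _ f) = f.eval 1 := rfl

lemma epsA_gE : epsA k p (gE k p) = 1 := by
  simp [gE, epsA_mk]

lemma gE_sub_one_eq : gE k p - 1 = Ideal.Quotient.mk _ (X - C 1) := by
  simp [gE, map_sub]

lemma t_pow_ne (n : ℕ) (hn : n < p) : (gE k p - 1) ^ n ≠ 0 := by
  rw [gE_sub_one_eq, ← map_pow, Ne, Ideal.Quotient.eq_zero_iff_mem,
    Ideal.mem_span_singleton]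
  intro ⟨c, hc⟩
  have hne : ((X : Polynomial k) - C 1) ^ n ≠ 0 :=
    pow_ne_zero _ (X_sub_C_ne_zero 1)
  have hc0 : c ≠ 0 := by rintro rfl; rw [mul_zero] at hc; exact hne hc
  have hXp : ((X : Polynomial k) ^ p - 1 : Polynomial k) ≠ 0 := by
    intro h
    have := congrArg natDegree h
    rw [show ((1 : Polynomial k)) = C 1 from (map_one C).symm] at this
    rw [natDegree_X_pow_sub_C] at this
    simp at this
    omega
  have hd := congrArg natDegree hc
  rw [natDegree_pow, natDegree_X_sub_C, natDegree_mul hXp hc0,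
    show ((1 : Polynomial k)) = C 1 from (map_one C).symm, natDegree_X_pow_sub_C] at hd
  omega

lemma ker_factor {x : kGring k p} (hx : epsA k p x = 0) :
    ∃ y : kGring k p, x = (gE k p - 1) * y := by
  obtain ⟨f, rfl⟩ := Ideal.Quotient.mk_surjective x
  rw [epsA_mk] at hx
  have : (X - C 1) ∣ f := dvd_iff_isRoot.mpr hx
  obtain ⟨q, hq⟩ := this
  exact ⟨Ideal.Quotient.mk _ q, by rw [hq, map_mul, gE_sub_one_eq]⟩

lemma epsA_algebraMap (c : k) : epsA k p (algebraMap k (kGring k p) c) = c := by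
  rw [IsScalarTower.algebraMap_apply k (Polynomial k) (kGring k p)]
  simp [Ideal.Quotient.algebraMap_eq, epsA_mk, algebraMap_eq]

lemma epsA_smul (c : k) (x : kGring k p) : epsA k p (c • x) = c * epsA k p x := by
  obtain ⟨f, rfl⟩ := Ideal.Quotient.mk_surjective x
  have h : c • (Ideal.Quotient.mk (Ideal.span {(X : Polynomial k) ^ p - 1}) f)
      = Ideal.Quotient.mk _ (c • f) := rfl
  rw [h, epsA_mk, epsA_mk, Polynomial.smul_eq_C_mul, eval_mul, eval_C]

variable [CharP k p] (hp : p.Prime)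
include hp

lemma t_pow_p : (gE k p - 1) ^ p = 0 := by
  haveI : Fact p.Prime := ⟨hp⟩
  rw [gE_sub_one_eq, ← map_pow, sub_pow_char, Ideal.Quotient.eq_zero_iff_mem]
  simp [Ideal.mem_span_singleton]





lemma isUnit_iff_epsA {x : kGring k p} : IsUnit x ↔ epsA k p x ≠ 0 := by
  constructor
  · intro h h0
    have := h.map (epsA k p)
    rw [h0] at this
    exact (not_isUnit_zero this)
  · intro h
    have hker : epsA k p (x - algebraMap k _ (epsA k p x)) = 0 := by
      rw [map_sub, epsA_algebraMap, sub_self]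
    obtain ⟨y, hy⟩ := ker_factor hker
    have hnil : IsNilpotent (x - algebraMap k _ (epsA k p x)) := by
      refine ⟨p, ?_⟩
      rw [hy, mul_pow, t_pow_p hp, zero_mul]
    have hu : IsUnit (algebraMap k (kGring k p) (epsA k p x)) :=
      (isUnit_iff_ne_zero.mpr h).map (algebraMap k (kGring k p))
    have := hnil.isUnit_add_right_of_commute hu (Commute.all _ _)
    simpa using this

end Aux

/-- Let `μ = ∑_{a=1}^{p-1} m_a (g^a - 1)` be an arbitrary element of the augmentation ideal
of `kG` (an arbitrary zero-divisor) and `D` the derivation of `kG` with `D(g) = g`.  Then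
`μ^{p-1} ≠ 0` iff `D(μ)` is invertible in `kG`; and if `D(μ)` is a zero-divisor (i.e. not
invertible), then `μ^{(p+1)/2} = 0`. -/
theorem mu_pow_criterion (k : Type) [Field k] [IsAlgClosed k] (p : ℕ) (hp : p.Prime)
    (hodd : Odd p) [CharP k p] (m : Fin p → k)
    (D : Derivation k (kGring k p) (kGring k p)) (hD : D (gE k p) = gE k p)
    (μ : kGring k p) (hμ : μ = ∑ a : Fin p, m a • (gE k p ^ (a : ℕ) - 1)) :
    (μ ^ (p - 1) ≠ 0 ↔ IsUnit (D μ)) ∧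
    (¬ IsUnit (D μ) → μ ^ ((p + 1) / 2) = 0) := by
  have hp3 : 3 ≤ p := by
    have := hp.two_le
    rcases hodd with ⟨c, hc⟩
    omega
  set t := gE k p - 1 with ht
  set v := ∑ a : Fin p, m a • (∑ i ∈ Finset.range (a : ℕ), gE k p ^ i) with hv
  have hμv : μ = t * v := by
    rw [hμ, hv, Finset.mul_sum]
    refine Finset.sum_congr rfl fun a _ => ?_
    rw [mul_smul_comm, ht, mul_comm, geom_sum_mul]
  have hεv : epsA k p v = ∑ a : Fin p, m a * ((a : ℕ) : k) := by
    rw [hv, map_sum]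
    refine Finset.sum_congr rfl fun a _ => ?_
    rw [epsA_smul, map_sum]
    simp [epsA_gE, map_pow]
  have hεD : epsA k p (D μ) = ∑ a : Fin p, m a * ((a : ℕ) : k) := by
    rw [hμ, map_sum, map_sum]
    refine Finset.sum_congr rfl fun a _ => ?_
    rw [Derivation.map_smul, map_sub, Derivation.map_one_eq_zero, sub_zero,
      Derivation.leibniz_pow, hD, epsA_smul, map_nsmul, smul_eq_mul,
      map_mul, map_pow, epsA_gE, one_pow, one_mul, nsmul_eq_mul, mul_one]
  have key : IsUnit (D μ) ↔ IsUnit v := by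
    rw [isUnit_iff_epsA hp, isUnit_iff_epsA hp, hεD, hεv]
  have h1 : IsUnit v → μ ^ (p - 1) ≠ 0 := by
    intro hu h0
    rw [hμv, mul_pow, (hu.pow (p - 1)).mul_left_eq_zero] at h0
    exact t_pow_ne (p - 1) (by omega) h0
  have h2 : ¬ IsUnit v → μ ^ (p - 1) = 0 ∧ μ ^ ((p + 1) / 2) = 0 := by
    intro hu
    rw [isUnit_iff_epsA hp, not_not] at hu
    obtain ⟨w, hw⟩ := ker_factor hu
    have hμ2 : μ = t ^ 2 * w := by rw [hμv, hw, ← ht]; ring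
    constructor
    · rw [hμ2, mul_pow, ← pow_mul]
      have hz : t ^ (2 * (p - 1)) = 0 := by
        have h : 2 * (p - 1) = p + (p - 2) := by omega
        rw [h, pow_add, t_pow_p hp, zero_mul]
      rw [hz, zero_mul]
    · rw [hμ2, mul_pow, ← pow_mul]
      have h : 2 * ((p + 1) / 2) = p + 1 := by
        rcases hodd with ⟨c, hc⟩
        omega
      rw [h, pow_add, t_pow_p hp, zero_mul, zero_mul]
  refine ⟨⟨fun hne => key.mpr ?_, fun hDu => h1 (key.mp hDu)⟩,
    fun hDu => (h2 (mt key.mpr hDu)).2⟩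
  by_contra hv0
  exact hne (h2 hv0).1
end
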